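/- arXiv:2012.14448 — 8 statements merged into one kernel-verified Lean document; each statement's English description precedes it below -/
import Mathlib

section
/- Let d ≥ 1, let f be a Schwartz function on ℝ^d, and let t > 0. Then for every x ∈ ℝ^d one has the identity (2π)^{-d} ∫_{ℝ^d} e^{i(t|ξ|² + x·ξ)} f̂(ξ) dξ = (4πt)^{-d/2} e^{i d π/4} ∫_{ℝ^d} e^{-i|x−y|²/(4t)} f(y) dy, i.e. the free Schrödinger evolution written as a Fourier multiplier coincides with convolution against the explicit Fresnel kernel. -/
open MeasureTheory Complex Filter
open scoped RealInnerProductSpace FourierTransform Real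

variable {d : ℕ}

/-- `(r i)^w = r^{Re stuff}...`: cpow of a positive real times `I`. -/
lemma cpow_pos_mul_I (r : ℝ) (hr : 0 < r) (w : ℂ) :
    ((r : ℂ) * Complex.I) ^ w
      = Complex.exp (((Real.log r : ℂ) + (Real.pi / 2 : ℝ) * Complex.I) * w) := by
  have hne : ((r : ℂ) * Complex.I) ≠ 0 := by
    simp [Complex.I_ne_zero, Complex.ofReal_ne_zero, hr.ne']
  rw [Complex.cpow_def_of_ne_zero hne]
  have hlog : Complex.log ((r : ℂ) * Complex.I)
      = (Real.log r : ℂ) + ((Real.pi / 2 : ℝ) : ℂ) * Complex.I := by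
    apply Complex.ext
    · rw [Complex.log_re]
      simp [abs_of_pos hr]
    · rw [Complex.log_im]
      have h2 : ((Real.log r : ℂ) + ((Real.pi / 2 : ℝ) : ℂ) * Complex.I).im = Real.pi / 2 := by
        simp
      rw [h2, Complex.arg_eq_pi_div_two_iff]
      exact ⟨by simp, by simpa using hr⟩
  rw [hlog]


/-- Fubini + Gaussian integral step, for `Re b > 0`. -/
lemma fresnel_fubini (b : ℂ) (hb : 0 < b.re) (f : SchwartzMap (EuclideanSpace ℝ (Fin d)) ℂ)
    (x : EuclideanSpace ℝ (Fin d)) :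
    ∫ ξ : EuclideanSpace ℝ (Fin d),
        Complex.exp (-b * ‖ξ‖ ^ 2 + Complex.I * (⟪x, ξ⟫ : ℝ)) *
          ∫ y : EuclideanSpace ℝ (Fin d), Complex.exp (-(Complex.I * (⟪y, ξ⟫ : ℝ))) * f y
      = (↑Real.pi / b) ^ ((d : ℂ) / 2) *
          ∫ y : EuclideanSpace ℝ (Fin d),
            Complex.exp (Complex.I ^ 2 * ‖x - y‖ ^ 2 / (4 * b)) * f y := by
  have hbne : b ≠ 0 := fun h => by simp [h] at hb
  -- the double integrand
  set G : (EuclideanSpace ℝ (Fin d)) × (EuclideanSpace ℝ (Fin d)) → ℂ := fun p =>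
    Complex.exp (-b * ‖p.1‖ ^ 2 + Complex.I * (⟪x, p.1⟫ : ℝ)) *
      (Complex.exp (-(Complex.I * (⟪p.2, p.1⟫ : ℝ))) * f p.2) with hG
  have hGcont : Continuous G := by
    have c1 : Continuous fun p : (EuclideanSpace ℝ (Fin d)) × (EuclideanSpace ℝ (Fin d)) =>
        (-b * ‖p.1‖ ^ 2 + Complex.I * (⟪x, p.1⟫ : ℝ) : ℂ) :=
      (continuous_const.mul ((Complex.continuous_ofReal.comp continuous_fst.norm).pow 2)).add
        (continuous_const.mul (Complex.continuous_ofReal.comp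
          (Continuous.inner continuous_const continuous_fst)))
    have c2 : Continuous fun p : (EuclideanSpace ℝ (Fin d)) × (EuclideanSpace ℝ (Fin d)) =>
        (-(Complex.I * (⟪p.2, p.1⟫ : ℝ)) : ℂ) :=
      (continuous_const.mul (Complex.continuous_ofReal.comp
        (Continuous.inner continuous_snd continuous_fst))).neg
    exact (Complex.continuous_exp.comp c1).mul
      ((Complex.continuous_exp.comp c2).mul (f.continuous.comp continuous_snd))
  have hGint : Integrable G := by
    have hbound : Integrable (fun p : (EuclideanSpace ℝ (Fin d)) × (EuclideanSpace ℝ (Fin d)) =>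
        Real.exp (-b.re * ‖p.1‖ ^ 2) * ‖f p.2‖) := by
      rw [Measure.volume_eq_prod]
      have hg1 : Integrable (fun v : EuclideanSpace ℝ (Fin d) => Real.exp (-b.re * ‖v‖ ^ 2)) := by
        have := (GaussianFourier.integrable_cexp_neg_mul_sq_norm_add
          (V := EuclideanSpace ℝ (Fin d)) hb 0 (0 : EuclideanSpace ℝ (Fin d))).norm
        refine this.congr (Eventually.of_forall fun v => ?_)
        simp [Complex.norm_exp]
        norm_cast
        ring_nf
      exact hg1.mul_prod f.integrable.norm
    refine ⟨hGcont.aestronglyMeasurable, ?_⟩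
    refine hbound.hasFiniteIntegral.mono (Eventually.of_forall fun p => ?_)
    have h1 : ‖G p‖ = Real.exp (-b.re * ‖p.1‖ ^ 2) * ‖f p.2‖ := by
      simp only [hG, norm_mul, Complex.norm_exp]
      congr 2
      · simp
        norm_cast
        ring
      · simp
    rw [h1]
    exact le_abs_self _
  calc
    ∫ ξ : EuclideanSpace ℝ (Fin d),
        Complex.exp (-b * ‖ξ‖ ^ 2 + Complex.I * (⟪x, ξ⟫ : ℝ)) *
          ∫ y : EuclideanSpace ℝ (Fin d), Complex.exp (-(Complex.I * (⟪y, ξ⟫ : ℝ))) * f y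
      = ∫ ξ : EuclideanSpace ℝ (Fin d), ∫ y : EuclideanSpace ℝ (Fin d), G (ξ, y) := by
        congr 1 with ξ
        rw [← integral_const_mul]
    _ = ∫ y : EuclideanSpace ℝ (Fin d), ∫ ξ : EuclideanSpace ℝ (Fin d), G (ξ, y) := by
        exact integral_integral_swap hGint
    _ = ∫ y : EuclideanSpace ℝ (Fin d),
          ((↑Real.pi / b) ^ ((d : ℂ) / 2) * Complex.exp (Complex.I ^ 2 * ‖x - y‖ ^ 2 / (4 * b)))
            * f y := by
        congr 1 with y
        have h2 : ∀ ξ : EuclideanSpace ℝ (Fin d), G (ξ, y)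
            = Complex.exp (-b * ‖ξ‖ ^ 2 + Complex.I * (⟪x - y, ξ⟫ : ℝ)) * f y := by
          intro ξ
          simp only [hG]
          rw [← mul_assoc, ← Complex.exp_add]
          congr 2
          rw [inner_sub_left]
          push_cast
          ring
        simp_rw [h2]
        rw [integral_mul_const]
        congr 1
        have h3 := GaussianFourier.integral_cexp_neg_mul_sq_norm_add
          (V := EuclideanSpace ℝ (Fin d)) hb Complex.I (x - y)
        rw [finrank_euclideanSpace_fin] at h3
        exact h3
    _ = (↑Real.pi / b) ^ ((d : ℂ) / 2) *
          ∫ y : EuclideanSpace ℝ (Fin d),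
            Complex.exp (Complex.I ^ 2 * ‖x - y‖ ^ 2 / (4 * b)) * f y := by
        rw [← integral_const_mul]
        congr 1 with y
        ring

/-- The free Schrödinger evolution written as a Fourier multiplier coincides with
convolution against the explicit Fresnel kernel:
`(2π)^{-d} ∫ e^{i(t|ξ|² + x·ξ)} f̂(ξ) dξ = (4πt)^{-d/2} e^{idπ/4} ∫ e^{-i|x−y|²/(4t)} f(y) dy`,
where `f̂(ξ) = ∫ e^{-i y·ξ} f(y) dy`. -/
theorem stmt_0 (d : ℕ) (hd : 1 ≤ d) (f : SchwartzMap (EuclideanSpace ℝ (Fin d)) ℂ)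
    (t : ℝ) (ht : 0 < t) (x : EuclideanSpace ℝ (Fin d)) :
    (((2 * Real.pi) ^ d)⁻¹ : ℝ) •
      ∫ ξ : EuclideanSpace ℝ (Fin d),
        Complex.exp (Complex.I * ((t * ‖ξ‖ ^ 2 + ⟪x, ξ⟫ : ℝ) : ℂ)) *
          ∫ y : EuclideanSpace ℝ (Fin d),
            Complex.exp (-(Complex.I * ((⟪y, ξ⟫ : ℝ) : ℂ))) * f y
    = (((4 * Real.pi * t) ^ (-(d : ℝ) / 2) : ℝ) : ℂ) *
        Complex.exp (Complex.I * (d : ℂ) * (Real.pi : ℂ) / 4) *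
        ∫ y : EuclideanSpace ℝ (Fin d),
          Complex.exp (-(Complex.I * ((‖x - y‖ ^ 2 / (4 * t) : ℝ) : ℂ))) * f y := by
  set F : EuclideanSpace ℝ (Fin d) → ℂ := fun ξ => ∫ y : EuclideanSpace ℝ (Fin d), Complex.exp (-(Complex.I * (⟪y, ξ⟫ : ℝ))) * f y with hFdef
  -- F is (a rescaling of) the Fourier transform of f; it is continuous and integrable
  have hFeq : ∀ ξ : EuclideanSpace ℝ (Fin d), F ξ = 𝓕 (⇑f) ((2 * Real.pi)⁻¹ • ξ) := by
    intro ξ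
    rw [Real.fourier_eq']
    simp only [hFdef, smul_eq_mul]
    congr 1 with y
    congr 2
    rw [real_inner_smul_right]
    have h2 : (-2 * Real.pi * ((2 * Real.pi)⁻¹ * ⟪y, ξ⟫) : ℝ) = -⟪y, ξ⟫ := by
      field_simp
    rw [h2]
    push_cast
    ring
  have hFcont : Continuous F := by
    rw [funext hFeq]
    exact (SchwartzMap.fourierTransformCLM ℝ f).continuous.comp (continuous_const_smul _)
  have hFint : Integrable F := by
    rw [funext hFeq]
    exact (MeasureTheory.integrable_comp_smul_iff volume (𝓕 ⇑f)
      (by positivity : ((2 * Real.pi)⁻¹ : ℝ) ≠ 0)).2 (SchwartzMap.fourierTransformCLM ℝ f).integrable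
  have htC : ((t : ℂ)) ≠ 0 := by exact_mod_cast ht.ne'
  set z0 : ℂ := ((Real.pi / t : ℝ) : ℂ) * Complex.I with hz0
  set C0 : ℂ := z0 ^ ((d : ℂ) / 2) with hC0
  set J0 : ℂ := ∫ y : EuclideanSpace ℝ (Fin d), Complex.exp (-(Complex.I * ((‖x - y‖ ^ 2 / (4 * t) : ℝ) : ℂ))) * f y
    with hJ0
  have hb0 : (↑Real.pi / ((0 : ℂ) - Complex.I * t)) = z0 := by
    rw [hz0]
    push_cast
    rw [div_eq_iff (by simp [Complex.I_ne_zero, htC])]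
    rw [zero_sub]
    have : Complex.I * Complex.I = -1 := Complex.I_mul_I
    field_simp
    ring_nf
    rw [Complex.I_sq]
    ring
  have key : (∫ ξ : EuclideanSpace ℝ (Fin d), Complex.exp (Complex.I * ((t * ‖ξ‖ ^ 2 + ⟪x, ξ⟫ : ℝ) : ℂ)) * F ξ)
      = C0 * J0 := by
    set L : ℝ → ℂ := fun ε => ∫ ξ : EuclideanSpace ℝ (Fin d),
      Complex.exp (-((ε : ℂ) - Complex.I * t) * ‖ξ‖ ^ 2 + Complex.I * (⟪x, ξ⟫ : ℝ)) * F ξ with hL'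
    set R : ℝ → ℂ := fun ε => (↑Real.pi / ((ε : ℂ) - Complex.I * t)) ^ ((d : ℂ) / 2) *
      ∫ y : EuclideanSpace ℝ (Fin d), Complex.exp (Complex.I ^ 2 * ‖x - y‖ ^ 2 / (4 * ((ε : ℂ) - Complex.I * t))) * f y
      with hR'
    have hbre : ∀ ε : ℝ, (((ε : ℂ) - Complex.I * t)).re = ε := by
      intro ε; simp
    have heq : ∀ᶠ ε in nhdsWithin (0:ℝ) (Set.Ioi 0), L ε = R ε := by
      filter_upwards [self_mem_nhdsWithin] with ε hε
      have h1 : 0 < (((ε : ℂ) - Complex.I * t)).re := by rw [hbre]; exact hε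
      exact fresnel_fubini _ h1 f x
    have hL : Tendsto L (nhdsWithin (0:ℝ) (Set.Ioi 0))
        (nhds (∫ ξ : EuclideanSpace ℝ (Fin d), Complex.exp (Complex.I * ((t * ‖ξ‖ ^ 2 + ⟪x, ξ⟫ : ℝ) : ℂ)) * F ξ)) := by
      apply tendsto_integral_filter_of_dominated_convergence (bound := fun ξ => ‖F ξ‖)
      · filter_upwards [self_mem_nhdsWithin] with ε hε
        apply Continuous.aestronglyMeasurable
        refine Continuous.mul ?_ hFcont
        apply Complex.continuous_exp.comp
        exact (continuous_const.mul ((Complex.continuous_ofReal.comp continuous_norm).pow 2)).add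
          (continuous_const.mul (Complex.continuous_ofReal.comp
            (Continuous.inner continuous_const continuous_id)))
      · filter_upwards [self_mem_nhdsWithin] with ε hε
        apply Eventually.of_forall
        intro ξ
        rw [norm_mul]
        apply mul_le_of_le_one_left (norm_nonneg _)
        rw [Complex.norm_exp, Real.exp_le_one_iff]
        have : (-((ε : ℂ) - Complex.I * t) * ‖ξ‖ ^ 2 + Complex.I * (⟪x, ξ⟫ : ℝ)).re
            = -ε * ‖ξ‖ ^ 2 := by
          simp [Complex.add_re, Complex.mul_re, Complex.sub_re, Complex.sub_im,
            ← Complex.ofReal_pow]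
        rw [this]
        have hε' : (0:ℝ) < ε := hε
        nlinarith [sq_nonneg ‖ξ‖]
      · exact hFint.norm
      · apply Eventually.of_forall
        intro ξ
        have cts : Continuous fun ε : ℝ =>
            Complex.exp (-((ε : ℂ) - Complex.I * t) * ‖ξ‖ ^ 2 + Complex.I * (⟪x, ξ⟫ : ℝ)) * F ξ := by
          apply Continuous.mul _ continuous_const
          apply Complex.continuous_exp.comp
          exact (((Complex.continuous_ofReal.sub continuous_const).neg).mul continuous_const).add
            continuous_const
        have h0 := (cts.tendsto 0).mono_left (nhdsWithin_le_nhds (s := Set.Ioi 0))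
        convert h0 using 2
        push_cast
        ring
    have hRc : Tendsto R (nhdsWithin (0:ℝ) (Set.Ioi 0)) (nhds (C0 * J0)) := by
      apply Tendsto.mul
      · -- convergence of the constant prefactor
        have hq : Tendsto (fun ε : ℝ => (↑Real.pi / ((ε : ℂ) - Complex.I * t))) (nhds 0)
            (nhds z0) := by
          rw [← hb0]
          apply Tendsto.div tendsto_const_nhds
          · exact ((Complex.continuous_ofReal.sub continuous_const).tendsto 0)
          · rw [zero_sub, neg_ne_zero]
            simp [Complex.I_ne_zero, htC]
        have hslit : z0 ∈ Complex.slitPlane := by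
          rw [Complex.mem_slitPlane_iff]
          right
          have him : z0.im = Real.pi / t := by
            rw [hz0]
            simp
          rw [him]
          positivity
        exact ((continuousAt_cpow_const hslit).tendsto.comp hq).mono_left (nhdsWithin_le_nhds (s := Set.Ioi 0))
      · -- convergence of the integral, by dominated convergence
        rw [hJ0]
        apply tendsto_integral_filter_of_dominated_convergence (bound := fun y => ‖f y‖)
        · filter_upwards [self_mem_nhdsWithin] with ε hε
          apply Continuous.aestronglyMeasurable
          refine Continuous.mul ?_ f.continuous
          apply Complex.continuous_exp.comp
          apply Continuous.div_const
          exact (continuous_const.mul (((Complex.continuous_ofReal.comp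
            ((continuous_const.sub continuous_id).norm)).pow 2)))
        · filter_upwards [self_mem_nhdsWithin] with ε hε
          apply Eventually.of_forall
          intro y
          rw [norm_mul]
          apply mul_le_of_le_one_left (norm_nonneg _)
          rw [Complex.norm_exp, Real.exp_le_one_iff]
          set b : ℂ := (ε : ℂ) - Complex.I * t with hb
          have hz : Complex.I ^ 2 * (‖x - y‖ : ℂ) ^ 2 / (4 * b)
              = ((-(‖x - y‖ ^ 2) / 4 : ℝ) : ℂ) * b⁻¹ := by
            rw [Complex.I_sq]
            push_cast
            rw [div_eq_mul_inv, mul_inv]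
            ring
          rw [hz, Complex.re_ofReal_mul]
          apply mul_nonpos_of_nonpos_of_nonneg
          · have : (0:ℝ) ≤ ‖x - y‖ ^ 2 := sq_nonneg _
            linarith
          · rw [Complex.inv_re, hb, hbre]
            exact div_nonneg (le_of_lt hε) (Complex.normSq_nonneg _)
        · exact f.integrable.norm
        · apply Eventually.of_forall
          intro y
          have cts : Continuous fun ε : ℝ =>
              Complex.exp (Complex.I ^ 2 * (‖x - y‖ : ℂ) ^ 2 / (4 * ((ε : ℂ) - Complex.I * t)))
                * f y := by
            apply Continuous.mul _ continuous_const
            apply Complex.continuous_exp.comp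
            apply Continuous.div continuous_const
            · exact continuous_const.mul (Complex.continuous_ofReal.sub continuous_const)
            · intro ε
              simp only [Ne, mul_eq_zero, not_or]
              constructor
              · norm_num
              · intro h
                have := congrArg Complex.re h
                rw [hbre] at this
                have h2 := congrArg Complex.im h
                simp [Complex.sub_im, Complex.mul_im] at h2
                exact ht.ne' h2
          have h0 := (cts.tendsto 0).mono_left (nhdsWithin_le_nhds (s := Set.Ioi 0))
          convert h0 using 2
          rw [Complex.I_sq]
          push_cast
          rw [zero_sub]
          field_simp
          ring_nf
          rw [mul_comm]
          congr 2
          rw [Complex.inv_I]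
          ring
    exact tendsto_nhds_unique (hL.congr' heq) hRc
  rw [key]
  have hpt : (0:ℝ) < Real.pi / t := by positivity
  have hC0eq : C0 = (((Real.pi / t) ^ ((d : ℝ) / 2) : ℝ) : ℂ) *
      Complex.exp (Complex.I * (d : ℂ) * (Real.pi : ℂ) / 4) := by
    rw [hC0, hz0, cpow_pos_mul_I _ hpt]
    rw [show ((Real.log (Real.pi / t) : ℂ) + ((Real.pi / 2 : ℝ) : ℂ) * Complex.I) * ((d : ℂ) / 2)
        = ((((d : ℝ) / 2) * Real.log (Real.pi / t) : ℝ) : ℂ)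
            + Complex.I * (d : ℂ) * (Real.pi : ℂ) / 4 by push_cast; ring]
    rw [Complex.exp_add, ← Complex.ofReal_exp]
    congr 2
    rw [Real.rpow_def_of_pos hpt]
    ring_nf
  have hreal : ((((2 * Real.pi) ^ d)⁻¹ : ℝ)) * ((Real.pi / t) ^ ((d : ℝ) / 2))
      = (4 * Real.pi * t) ^ (-(d : ℝ) / 2) := by
    have hmul : ((Real.pi / t) ^ ((d : ℝ) / 2)) * ((4 * Real.pi * t) ^ ((d : ℝ) / 2))
        = (2 * Real.pi) ^ d := by
      rw [← Real.mul_rpow (by positivity) (by positivity)]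
      have h2 : (Real.pi / t) * (4 * Real.pi * t) = (2 * Real.pi) ^ 2 := by
        field_simp
        ring
      rw [h2, ← Real.rpow_natCast (2 * Real.pi) 2, ← Real.rpow_mul (by positivity)]
      rw [show (((2:ℕ)) : ℝ) * ((d : ℝ) / 2) = (d : ℝ) by push_cast; ring, Real.rpow_natCast]
    rw [neg_div, Real.rpow_neg (by positivity)]
    rw [eq_comm, inv_eq_iff_eq_inv, eq_comm, inv_eq_iff_eq_inv, eq_comm]
    field_simp
    rw [mul_comm Real.pi 2]
    linarith [hmul, mul_comm ((Real.pi / t) ^ ((d : ℝ) / 2)) ((4 * Real.pi * t) ^ ((d : ℝ) / 2))]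
  rw [hC0eq, Complex.real_smul, ← hreal]
  push_cast
  ring
end

section
/- Let d ≥ 1 and let f be a Schwartz function on ℝ^d. Define the free Schrödinger evolution ψ(t,x) := (2π)^{-d} ∫_{ℝ^d} e^{i(t|ξ|² + x·ξ)} f̂(ξ) dξ. Then for every t > 0 and every x ∈ ℝ^d, |ψ(t,x)| ≤ (4πt)^{-d/2} ∫_{ℝ^d} |f(y)| dy. In particular the free Schrödinger flow maps L¹ to L^∞ with operator norm bound (4πt)^{-d/2}. -/
set_option maxHeartbeats 1000000


open MeasureTheory Complex Filter
open scoped RealInnerProductSpace FourierTransform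

private lemma key_const (d : ℕ) {t : ℝ} (ht : 0 < t) :
    (((2 * Real.pi) ^ d)⁻¹ : ℝ) * (Real.pi / t) ^ ((d : ℝ) / 2) =
      (4 * Real.pi * t) ^ (-(d : ℝ) / 2) := by
  have hπ : (0:ℝ) < Real.pi := Real.pi_pos
  have h2π : (0:ℝ) < 2 * Real.pi := by positivity
  have hπt : (0:ℝ) < Real.pi / t := by positivity
  have h4 : (0:ℝ) < 4 * Real.pi * t := by positivity
  have h1 : (((2 * Real.pi) ^ d)⁻¹ : ℝ) = (2 * Real.pi) ^ (-(d:ℝ)) := by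
    rw [Real.rpow_neg h2π.le, Real.rpow_natCast]
  rw [h1, Real.rpow_def_of_pos h2π, Real.rpow_def_of_pos hπt, Real.rpow_def_of_pos h4,
    ← Real.exp_add]
  congr 1
  have l1 : Real.log (2 * Real.pi) = Real.log 2 + Real.log Real.pi :=
    Real.log_mul two_ne_zero hπ.ne'
  have l2 : Real.log (Real.pi / t) = Real.log Real.pi - Real.log t :=
    Real.log_div hπ.ne' ht.ne'
  have l3 : Real.log (4 * Real.pi * t)
      = Real.log 4 + Real.log Real.pi + Real.log t := by
    rw [Real.log_mul (by positivity) ht.ne', Real.log_mul (by norm_num) hπ.ne']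
  have l4 : Real.log 4 = 2 * Real.log 2 := by
    rw [show (4:ℝ) = 2 ^ 2 by norm_num, Real.log_pow]; push_cast; ring
  rw [l1, l2, l3, l4]
  ring

/-- The free Schrödinger evolution `ψ(t,x) = (2π)^{-d} ∫ e^{i(t|ξ|²+x·ξ)} f̂(ξ) dξ` of a
Schwartz function `f` satisfies the dispersive bound
`|ψ(t,x)| ≤ (4πt)^{-d/2} ‖f‖_{L¹}` for every `t > 0` and `x ∈ ℝ^d`. -/
theorem stmt_1 (d : ℕ) (hd : 1 ≤ d) (f : SchwartzMap (EuclideanSpace ℝ (Fin d)) ℂ)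
    (t : ℝ) (ht : 0 < t) (x : EuclideanSpace ℝ (Fin d)) :
    ‖(((2 * Real.pi) ^ d)⁻¹ : ℝ) •
        ∫ ξ : EuclideanSpace ℝ (Fin d),
          Complex.exp (Complex.I * ((t * ‖ξ‖ ^ 2 + ⟪x, ξ⟫ : ℝ) : ℂ)) *
            ∫ y : EuclideanSpace ℝ (Fin d),
              Complex.exp (-(Complex.I * ((⟪y, ξ⟫ : ℝ) : ℂ))) * f y‖ ≤
      (4 * Real.pi * t) ^ (-(d : ℝ) / 2) *
        ∫ y : EuclideanSpace ℝ (Fin d), ‖f y‖ := by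
  have hπ : (0:ℝ) < Real.pi := Real.pi_pos
  -- the Fourier transform appearing in the statement
  set fh : (EuclideanSpace ℝ (Fin d)) → ℂ := fun ξ => ∫ y, Complex.exp (-(Complex.I * ((⟪y, ξ⟫ : ℝ) : ℂ))) * f y
    with hfh_def
  have hfh_eq : fh = fun ξ => 𝓕 (⇑f) ((2 * Real.pi)⁻¹ • ξ) := by
    funext ξ
    rw [Real.fourier_eq']
    refine integral_congr_ae (Eventually.of_forall fun y => ?_)
    simp only [smul_eq_mul, real_inner_smul_right]
    have h2 : (-2 * Real.pi * ((2 * Real.pi)⁻¹ * ⟪y, ξ⟫) : ℝ) = -⟪y, ξ⟫ := by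
      field_simp
    rw [h2]
    congr 1
    push_cast
    ring
  have hFf : Continuous (𝓕 (⇑f)) := by
    have := (SchwartzMap.fourierTransformCLM ℝ f).continuous
    rwa [SchwartzMap.fourierTransformCLM_apply, SchwartzMap.fourier_coe] at this
  have hfh_cont : Continuous fh := by
    rw [hfh_eq]; exact hFf.comp (continuous_const_smul _)
  have hfh_int : Integrable fh := by
    rw [hfh_eq]
    have h0 : ((2 * Real.pi)⁻¹ : ℝ) ≠ 0 := by positivity
    have hI : Integrable (𝓕 (⇑f)) := by
      have := (SchwartzMap.fourierTransformCLM ℝ f).integrable (μ := volume)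
      rwa [SchwartzMap.fourierTransformCLM_apply, SchwartzMap.fourier_coe] at this
    exact hI.comp_smul h0
  -- the regularized evolution
  obtain ⟨J, hJ_def⟩ : ∃ J : ℝ → ℂ, J = fun (ε : ℝ) =>
      ∫ ξ : EuclideanSpace ℝ (Fin d),
        Complex.exp (-((ε : ℂ) - Complex.I * t) * (‖ξ‖ : ℂ) ^ 2
          + Complex.I * ((⟪x, ξ⟫ : ℝ) : ℂ)) * fh ξ := ⟨_, rfl⟩
  have hexp_norm : ∀ (ε : ℝ) (ξ : EuclideanSpace ℝ (Fin d)),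
      ‖Complex.exp (-((ε : ℂ) - Complex.I * t) * (‖ξ‖ : ℂ) ^ 2
        + Complex.I * ((⟪x, ξ⟫ : ℝ) : ℂ))‖ = Real.exp (-ε * ‖ξ‖ ^ 2) := by
    intro ε ξ
    rw [show (-((ε : ℂ) - Complex.I * t) * (‖ξ‖ : ℂ) ^ 2 + Complex.I * ((⟪x, ξ⟫ : ℝ) : ℂ))
        = (((-ε * ‖ξ‖ ^ 2 : ℝ)) : ℂ) + ((t * ‖ξ‖ ^ 2 + ⟪x, ξ⟫ : ℝ) : ℂ) * Complex.I from by
      push_cast; ring]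
    rw [Complex.norm_exp, Complex.add_re, Complex.ofReal_re,
      Complex.re_ofReal_mul, Complex.I_re, mul_zero, add_zero]
  have hosc : ∀ (y ξ : EuclideanSpace ℝ (Fin d)),
      ‖Complex.exp (-(Complex.I * ((⟪y, ξ⟫ : ℝ) : ℂ)))‖ = 1 := by
    intro y ξ
    rw [Complex.norm_exp]
    simp
  have hpt : ∀ ξ : EuclideanSpace ℝ (Fin d),
      Complex.exp (Complex.I * ((t * ‖ξ‖ ^ 2 + ⟪x, ξ⟫ : ℝ) : ℂ))
        = Complex.exp (-(((0 : ℝ) : ℂ) - Complex.I * t) * (‖ξ‖ : ℂ) ^ 2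
            + Complex.I * ((⟪x, ξ⟫ : ℝ) : ℂ)) := by
    intro ξ
    congr 1
    push_cast
    ring
  have hJ0 : (∫ ξ : EuclideanSpace ℝ (Fin d),
      Complex.exp (Complex.I * ((t * ‖ξ‖ ^ 2 + ⟪x, ξ⟫ : ℝ) : ℂ)) *
      ∫ y : EuclideanSpace ℝ (Fin d),
        Complex.exp (-(Complex.I * ((⟪y, ξ⟫ : ℝ) : ℂ))) * f y) = J 0 := by
    simp only [hJ_def, hfh_def]
    simp only [hpt]
  have hC : (0:ℝ) ≤ (Real.pi / t) ^ ((d:ℝ)/2) := Real.rpow_nonneg (by positivity) _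
  have hbound : ∀ ε : ℝ, 0 < ε →
      ‖J ε‖ ≤ (Real.pi / t) ^ ((d:ℝ)/2) * ∫ y : EuclideanSpace ℝ (Fin d), ‖f y‖ := by
    intro ε hε
    set b : ℂ := (ε : ℂ) - Complex.I * t with hb_def
    have hb : 0 < b.re := by simp [hb_def, hε]
    have habs_b : t ≤ ‖b‖ := by
      have h1 : |b.im| ≤ ‖b‖ := Complex.abs_im_le_norm b
      have him : b.im = -t := by simp [hb_def]
      rw [him, abs_neg, abs_of_pos ht] at h1
      exact h1
    have hG_int : Integrable (fun ξ : EuclideanSpace ℝ (Fin d) =>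
        Complex.exp (-b * (‖ξ‖ : ℂ) ^ 2 + Complex.I * ((⟪x, ξ⟫ : ℝ) : ℂ))) := by
      exact GaussianFourier.integrable_cexp_neg_mul_sq_norm_add
        (V := EuclideanSpace ℝ (Fin d)) hb Complex.I x
    have hF_cont : Continuous (fun p : EuclideanSpace ℝ (Fin d) × EuclideanSpace ℝ (Fin d) =>
        Complex.exp (-b * (‖p.1‖ : ℂ) ^ 2 + Complex.I * ((⟪x, p.1⟫ : ℝ) : ℂ)) *
          (Complex.exp (-(Complex.I * ((⟪p.2, p.1⟫ : ℝ) : ℂ))) * f p.2)) := by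
      have hcont1 : Continuous fun p : EuclideanSpace ℝ (Fin d) × EuclideanSpace ℝ (Fin d) =>
          -b * (‖p.1‖ : ℂ) ^ 2 + Complex.I * ((⟪x, p.1⟫ : ℝ) : ℂ) := by
        refine Continuous.add ?_ ?_
        · exact continuous_const.mul
            ((Complex.continuous_ofReal.comp continuous_fst.norm).pow 2)
        · exact continuous_const.mul
            (Complex.continuous_ofReal.comp (continuous_const.inner continuous_fst))
      have hcont2 : Continuous fun p : EuclideanSpace ℝ (Fin d) × EuclideanSpace ℝ (Fin d) =>
          -(Complex.I * ((⟪p.2, p.1⟫ : ℝ) : ℂ)) :=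
        (continuous_const.mul
          (Complex.continuous_ofReal.comp (continuous_snd.inner continuous_fst))).neg
      exact hcont1.cexp.mul (hcont2.cexp.mul (f.continuous.comp continuous_snd))
    have hF_int : Integrable (fun p : EuclideanSpace ℝ (Fin d) × EuclideanSpace ℝ (Fin d) =>
        Complex.exp (-b * (‖p.1‖ : ℂ) ^ 2 + Complex.I * ((⟪x, p.1⟫ : ℝ) : ℂ)) *
          (Complex.exp (-(Complex.I * ((⟪p.2, p.1⟫ : ℝ) : ℂ))) * f p.2))
        (volume.prod volume) := by
      have hgint : Integrable (fun p : EuclideanSpace ℝ (Fin d) × EuclideanSpace ℝ (Fin d) =>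
          ‖Complex.exp (-b * (‖p.1‖ : ℂ) ^ 2 + Complex.I * ((⟪x, p.1⟫ : ℝ) : ℂ))‖ * ‖f p.2‖)
          (volume.prod volume) := hG_int.norm.mul_prod f.integrable.norm
      refine hgint.mono' hF_cont.aestronglyMeasurable (Eventually.of_forall fun p => ?_)
      rw [norm_mul, norm_mul, hosc, one_mul]
    have hmul : ∀ ξ : EuclideanSpace ℝ (Fin d),
        Complex.exp (-b * (‖ξ‖ : ℂ) ^ 2 + Complex.I * ((⟪x, ξ⟫ : ℝ) : ℂ)) *
          (∫ y : EuclideanSpace ℝ (Fin d),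
            Complex.exp (-(Complex.I * ((⟪y, ξ⟫ : ℝ) : ℂ))) * f y)
        = ∫ y : EuclideanSpace ℝ (Fin d),
            Complex.exp (-b * (‖ξ‖ : ℂ) ^ 2 + Complex.I * ((⟪x, ξ⟫ : ℝ) : ℂ)) *
              (Complex.exp (-(Complex.I * ((⟪y, ξ⟫ : ℝ) : ℂ))) * f y) :=
      fun ξ => (integral_const_mul _ _).symm
    have hswap : J ε = ∫ y : EuclideanSpace ℝ (Fin d), ∫ ξ : EuclideanSpace ℝ (Fin d),
        Complex.exp (-b * (‖ξ‖ : ℂ) ^ 2 + Complex.I * ((⟪x, ξ⟫ : ℝ) : ℂ)) *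
          (Complex.exp (-(Complex.I * ((⟪y, ξ⟫ : ℝ) : ℂ))) * f y) := by
      rw [← integral_integral_swap hF_int]
      simp only [hJ_def, hfh_def, hb_def]
      simp only [← hb_def, hmul]
    have hker : ∀ y : EuclideanSpace ℝ (Fin d), (∫ ξ : EuclideanSpace ℝ (Fin d),
        Complex.exp (-b * (‖ξ‖ : ℂ) ^ 2 + Complex.I * ((⟪x, ξ⟫ : ℝ) : ℂ)) *
          (Complex.exp (-(Complex.I * ((⟪y, ξ⟫ : ℝ) : ℂ))) * f y))
        = (((Real.pi : ℂ) / b) ^ ((d : ℂ) / 2) *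
            Complex.exp (Complex.I ^ 2 * ((‖x - y‖ : ℝ) : ℂ) ^ 2 / (4 * b))) * f y := by
      intro y
      have hptk : ∀ ξ : EuclideanSpace ℝ (Fin d),
          Complex.exp (-b * (‖ξ‖ : ℂ) ^ 2 + Complex.I * ((⟪x, ξ⟫ : ℝ) : ℂ)) *
            (Complex.exp (-(Complex.I * ((⟪y, ξ⟫ : ℝ) : ℂ))) * f y)
          = Complex.exp (-b * (‖ξ‖ : ℂ) ^ 2 + Complex.I * ((⟪x - y, ξ⟫ : ℝ) : ℂ)) * f y := by
        intro ξ
        rw [← mul_assoc, ← Complex.exp_add]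
        congr 2
        rw [inner_sub_left]
        push_cast
        ring
      simp only [hptk]
      rw [integral_mul_const]
      congr 1
      have h := GaussianFourier.integral_cexp_neg_mul_sq_norm_add
        (V := EuclideanSpace ℝ (Fin d)) hb Complex.I (x - y)
      rw [finrank_euclideanSpace_fin] at h
      exact h
    have hJe : J ε = ∫ y : EuclideanSpace ℝ (Fin d), (((Real.pi : ℂ) / b) ^ ((d : ℂ) / 2) *
        Complex.exp (Complex.I ^ 2 * ((‖x - y‖ : ℝ) : ℂ) ^ 2 / (4 * b))) * f y := by
      rw [hswap]
      simp only [hker]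
    have hK : ∀ y : EuclideanSpace ℝ (Fin d), ‖((Real.pi : ℂ) / b) ^ ((d : ℂ) / 2) *
        Complex.exp (Complex.I ^ 2 * ((‖x - y‖ : ℝ) : ℂ) ^ 2 / (4 * b))‖
          ≤ (Real.pi / t) ^ ((d:ℝ)/2) := by
      intro y
      rw [norm_mul]
      have h1 : ‖((Real.pi : ℂ) / b) ^ ((d : ℂ) / 2)‖ ≤ (Real.pi / t) ^ ((d:ℝ)/2) := by
        refine (Complex.norm_cpow_le _ _).trans ?_
        have him : ((d : ℂ) / 2).im = 0 := by simp
        have hre : ((d : ℂ) / 2).re = (d : ℝ) / 2 := by simp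
        rw [him, hre, mul_zero, Real.exp_zero, div_one, norm_div, Complex.norm_real, Real.norm_eq_abs,
          abs_of_pos hπ]
        refine Real.rpow_le_rpow (by positivity) ?_ (by positivity)
        exact div_le_div_of_nonneg_left hπ.le ht habs_b
      have h2 : ‖Complex.exp (Complex.I ^ 2 * ((‖x - y‖ : ℝ) : ℂ) ^ 2 / (4 * b))‖ ≤ 1 := by
        rw [Complex.norm_exp, Real.exp_le_one_iff]
        have heq : Complex.I ^ 2 * ((‖x - y‖ : ℝ) : ℂ) ^ 2 / (4 * b)
            = ((‖x - y‖ ^ 2 : ℝ) : ℂ) * (-(4 * b)⁻¹) := by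
          rw [Complex.I_sq]
          push_cast
          ring
        rw [heq, Complex.re_ofReal_mul]
        have hinv : 0 ≤ ((4 * b)⁻¹).re := by
          rw [Complex.inv_re]
          apply div_nonneg _ (Complex.normSq_nonneg _)
          simp [hb_def]
          positivity
        have hle : (-(4 * b)⁻¹).re ≤ 0 := by
          rw [Complex.neg_re]
          linarith
        nlinarith [sq_nonneg ‖x - y‖]
      calc ‖((Real.pi : ℂ) / b) ^ ((d : ℂ) / 2)‖ *
            ‖Complex.exp (Complex.I ^ 2 * ((‖x - y‖ : ℝ) : ℂ) ^ 2 / (4 * b))‖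
          ≤ (Real.pi / t) ^ ((d:ℝ)/2) * 1 :=
            mul_le_mul h1 h2 (norm_nonneg _) hC
        _ = (Real.pi / t) ^ ((d:ℝ)/2) := mul_one _
    rw [hJe]
    calc ‖∫ y : EuclideanSpace ℝ (Fin d), (((Real.pi : ℂ) / b) ^ ((d : ℂ) / 2) *
            Complex.exp (Complex.I ^ 2 * ((‖x - y‖ : ℝ) : ℂ) ^ 2 / (4 * b))) * f y‖
        ≤ ∫ y : EuclideanSpace ℝ (Fin d), ‖(((Real.pi : ℂ) / b) ^ ((d : ℂ) / 2) *
            Complex.exp (Complex.I ^ 2 * ((‖x - y‖ : ℝ) : ℂ) ^ 2 / (4 * b))) * f y‖ :=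
          norm_integral_le_integral_norm _
      _ ≤ ∫ y : EuclideanSpace ℝ (Fin d), (Real.pi / t) ^ ((d:ℝ)/2) * ‖f y‖ := by
          refine integral_mono_of_nonneg (Eventually.of_forall fun y => norm_nonneg _)
            (f.integrable.norm.const_mul _) (Eventually.of_forall fun y => ?_)
          show ‖(((Real.pi : ℂ) / b) ^ ((d : ℂ) / 2) *
            Complex.exp (Complex.I ^ 2 * ((‖x - y‖ : ℝ) : ℂ) ^ 2 / (4 * b))) * f y‖
              ≤ (Real.pi / t) ^ ((d:ℝ)/2) * ‖f y‖
          rw [norm_mul]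
          exact mul_le_mul_of_nonneg_right (hK y) (norm_nonneg _)
      _ = (Real.pi / t) ^ ((d:ℝ)/2) * ∫ y : EuclideanSpace ℝ (Fin d), ‖f y‖ :=
          integral_const_mul _ _
  have htend : Filter.Tendsto J (nhdsWithin 0 (Set.Ioi 0)) (nhds (J 0)) := by
    rw [hJ_def]
    refine tendsto_integral_filter_of_dominated_convergence
      (F := fun (ε : ℝ) (ξ : EuclideanSpace ℝ (Fin d)) =>
        Complex.exp (-((ε : ℂ) - Complex.I * t) * (‖ξ‖ : ℂ) ^ 2
          + Complex.I * ((⟪x, ξ⟫ : ℝ) : ℂ)) * fh ξ)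
      (f := fun ξ : EuclideanSpace ℝ (Fin d) =>
        Complex.exp (-(((0 : ℝ) : ℂ) - Complex.I * t) * (‖ξ‖ : ℂ) ^ 2
          + Complex.I * ((⟪x, ξ⟫ : ℝ) : ℂ)) * fh ξ)
      (fun ξ => ‖fh ξ‖)
      (Eventually.of_forall fun ε => ?_) ?_ hfh_int.norm
      (Eventually.of_forall fun ξ => ?_)
    · refine Continuous.aestronglyMeasurable ?_
      have hcont1 : Continuous fun ξ : EuclideanSpace ℝ (Fin d) =>
          -((ε : ℂ) - Complex.I * t) * (‖ξ‖ : ℂ) ^ 2 + Complex.I * ((⟪x, ξ⟫ : ℝ) : ℂ) := by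
        refine Continuous.add ?_ ?_
        · exact continuous_const.mul ((Complex.continuous_ofReal.comp continuous_norm).pow 2)
        · exact continuous_const.mul
            (Complex.continuous_ofReal.comp (continuous_const.inner continuous_id))
      exact hcont1.cexp.mul hfh_cont
    · filter_upwards [self_mem_nhdsWithin] with ε hε
      refine Eventually.of_forall fun ξ => ?_
      simp only [norm_mul, hexp_norm]
      have h1 : Real.exp (-ε * ‖ξ‖ ^ 2) ≤ 1 := by
        rw [Real.exp_le_one_iff]
        have h2 : (0:ℝ) < ε := hε
        nlinarith [sq_nonneg ‖ξ‖]
      nlinarith [norm_nonneg (fh ξ)]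
    · have hc : Continuous (fun ε : ℝ =>
          Complex.exp (-((ε : ℂ) - Complex.I * t) * (‖ξ‖ : ℂ) ^ 2
            + Complex.I * ((⟪x, ξ⟫ : ℝ) : ℂ)) * fh ξ) := by
        refine Continuous.mul ?_ continuous_const
        refine Continuous.cexp ?_
        refine Continuous.add ?_ continuous_const
        exact ((Complex.continuous_ofReal.sub continuous_const).neg).mul continuous_const
      exact (hc.tendsto 0).mono_left nhdsWithin_le_nhds
  rw [hJ0]
  have hnt : Filter.Tendsto (fun ε : ℝ => ‖(((2 * Real.pi) ^ d)⁻¹ : ℝ) • J ε‖)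
      (nhdsWithin 0 (Set.Ioi 0)) (nhds ‖(((2 * Real.pi) ^ d)⁻¹ : ℝ) • J 0‖) :=
    (htend.const_smul _).norm
  refine le_of_tendsto hnt ?_
  filter_upwards [self_mem_nhdsWithin] with ε hε
  rw [norm_smul, Real.norm_eq_abs,
    _root_.abs_of_nonneg (show (0:ℝ) ≤ (((2 * Real.pi) ^ d)⁻¹ : ℝ) from by positivity)]
  calc (((2 * Real.pi) ^ d)⁻¹ : ℝ) * ‖J ε‖
      ≤ (((2 * Real.pi) ^ d)⁻¹ : ℝ) *
          ((Real.pi / t) ^ ((d:ℝ)/2) * ∫ y : EuclideanSpace ℝ (Fin d), ‖f y‖) :=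
        mul_le_mul_of_nonneg_left (hbound ε hε) (by positivity)
    _ = (4 * Real.pi * t) ^ (-(d : ℝ) / 2) * ∫ y : EuclideanSpace ℝ (Fin d), ‖f y‖ := by
        rw [← mul_assoc, key_const d ht]
end

section
/- (Watson's lemma.) Let f : (0,∞) → ℂ be continuous, let 0 < λ₀ < λ₁ < λ₂ < … be real numbers and a₀, a₁, a₂, … ∈ ℂ, and assume: (i) for every N ≥ 1 there exist C_N, x_N > 0 such that |f(x) − Σ_{n=0}^{N−1} a_n x^{λ_n − 1}| ≤ C_N x^{λ_N − 1} for all 0 < x ≤ x_N; (ii) there exist M, c > 0 with |f(x)| ≤ M e^{c x} for all x > 0. Then for every N ≥ 1 and every δ ∈ (0, π/2) there exist constants C, R > 0 such that for all complex p with |p| ≥ R and |arg p| ≤ π/2 − δ, the integral ∫₀^∞ e^{−xp} f(x) dx converges absolutely and |∫₀^∞ e^{−xp} f(x) dx − Σ_{n=0}^{N−1} a_n Γ(λ_n) p^{−λ_n}| ≤ C |p|^{−λ_N}. -/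
open MeasureTheory Complex
open Set Filter


lemma watson_tail_bound (lam a x₁ : ℝ) (ha : 0 < a) (hx₁ : 0 < x₁) :
    ∃ B : ℝ, 0 < B ∧ ∀ t : ℝ, x₁ ≤ t → t ^ lam * Real.exp (-a * t) ≤ B := by
  have h := tendsto_rpow_mul_exp_neg_mul_atTop_nhds_zero lam a ha
  obtain ⟨T, hT⟩ := (h.eventually_le_const (by norm_num : (0:ℝ) < 1)).exists_forall_of_atTop
  have hcont : ContinuousOn (fun t : ℝ => t ^ lam * Real.exp (-a * t)) (Icc x₁ (max T x₁)) := by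
    apply ContinuousOn.mul
    · exact ContinuousOn.rpow_const continuousOn_id fun t ht =>
        Or.inl (hx₁.trans_le ht.1).ne'
    · exact (Real.continuous_exp.comp (continuous_const.mul continuous_id)).continuousOn
  obtain ⟨B₀, hB₀⟩ := isCompact_Icc.exists_bound_of_continuousOn hcont
  refine ⟨max B₀ 1, lt_of_lt_of_le one_pos (le_max_right _ _), fun t ht => ?_⟩
  rcases le_total t (max T x₁) with h1 | h1
  · exact le_trans (le_abs_self _) (le_trans (hB₀ t ⟨ht, h1⟩) (le_max_left _ _))
  · exact le_trans (hT t (le_trans (le_max_left _ _) h1)) (le_max_right _ _)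

lemma watson_int_real {lam r : ℝ} (hlam : -1 < lam) (hr : 0 < r) :
    IntegrableOn (fun x : ℝ => x ^ lam * Real.exp (-r * x)) (Set.Ioi 0) := by
  refine (integrableOn_rpow_mul_exp_neg_mul_rpow hlam zero_lt_one hr).congr_fun
    (fun x hx => by simp only [Real.rpow_one]) measurableSet_Ioi

lemma watson_cont_c (lam : ℝ) (p : ℂ) :
    ContinuousOn (fun x : ℝ => (x:ℂ) ^ ((lam:ℂ) - 1) * Complex.exp (-(p * x))) (Set.Ioi 0) := by
  apply ContinuousOn.mul
  · intro x hx
    exact ((continuousAt_cpow_const (Or.inl (by simpa using hx))).comp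
      Complex.continuous_ofReal.continuousAt).continuousWithinAt
  · exact (Complex.continuous_exp.comp
      ((continuous_const.mul Complex.continuous_ofReal).neg)).continuousOn

lemma watson_norm_c {lam : ℝ} {x : ℝ} (hx : 0 < x) (p : ℂ) :
    ‖(x:ℂ) ^ ((lam:ℂ) - 1) * Complex.exp (-(p * x))‖ = x ^ (lam - 1) * Real.exp (-p.re * x) := by
  rw [norm_mul, Complex.norm_cpow_eq_rpow_re_of_pos hx,
    Complex.norm_exp]
  norm_num [Complex.sub_re, Complex.ofReal_re, mul_comm]

lemma watson_int_c {lam : ℝ} (hlam : 0 < lam) {p : ℂ} (hp : 0 < p.re) :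
    IntegrableOn (fun x : ℝ => (x:ℂ) ^ ((lam:ℂ) - 1) * Complex.exp (-(p * x))) (Set.Ioi 0) := by
  refine Integrable.mono' (watson_int_real (lam := lam - 1) (by linarith) hp)
    ((watson_cont_c lam p).aestronglyMeasurable measurableSet_Ioi) ?_
  filter_upwards [ae_restrict_mem measurableSet_Ioi] with x hx
  rw [watson_norm_c hx p]

lemma watson_laplace {lam : ℝ} (hlam : 0 < lam) {p : ℂ} (hp : 0 < p.re) :
    ∫ x : ℝ in Set.Ioi 0, (x:ℂ) ^ ((lam:ℂ) - 1) * Complex.exp (-(p * x)) =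
      Complex.Gamma lam * p ^ (-(lam:ℂ)) := by
  set F : ℂ → ℂ := fun q => ∫ x : ℝ in Set.Ioi 0, (x:ℂ) ^ ((lam:ℂ) - 1) * Complex.exp (-(q * x))
    with hF_def
  set G : ℂ → ℂ := fun q => Complex.Gamma lam * q ^ (-(lam:ℂ)) with hG_def
  have hU : IsOpen {z : ℂ | 0 < z.re} := isOpen_lt continuous_const Complex.continuous_re
  have hFan : AnalyticOnNhd ℂ F {z : ℂ | 0 < z.re} := by
    refine DifferentiableOn.analyticOnNhd (fun q hq => ?_) hU
    have hq : 0 < q.re := hq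
    set F' : ℂ → ℝ → ℂ := fun w x =>
      (x:ℂ) ^ ((lam:ℂ) - 1) * (Complex.exp (-(w * x)) * (-(x:ℂ))) with hF'_def
    have key := hasDerivAt_integral_of_dominated_loc_of_deriv_le
      (F := fun w (x : ℝ) => (x:ℂ) ^ ((lam:ℂ) - 1) * Complex.exp (-(w * x)))
      (F' := F') (x₀ := q) (bound := fun x : ℝ => x ^ lam * Real.exp (-(q.re/2) * x))
      (μ := volume.restrict (Set.Ioi 0)) (s := Metric.ball q (q.re/2)) (Metric.ball_mem_nhds q (by linarith)) ?_ ?_ ?_ ?_ ?_ ?_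
    · exact key.2.differentiableAt.differentiableWithinAt
    · exact Eventually.of_forall fun w =>
        (watson_cont_c lam w).aestronglyMeasurable measurableSet_Ioi
    · exact watson_int_c hlam hq
    · apply ContinuousOn.aestronglyMeasurable ?_ measurableSet_Ioi
      exact ((watson_cont_c lam q).mul
        ((continuous_neg.comp Complex.continuous_ofReal).continuousOn)).congr
        (fun x hx => by simp [hF'_def]; ring)
    · filter_upwards [ae_restrict_mem measurableSet_Ioi] with x hx
      intro w hw
      have hx : (0:ℝ) < x := hx
      have hwre : q.re / 2 ≤ w.re := by
        have := Complex.abs_re_le_norm (w - q)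
        have h2 : ‖w - q‖ < q.re / 2 := by
          simpa [Complex.dist_eq] using Metric.mem_ball.mp hw
        have := abs_le.mp (le_of_lt (lt_of_le_of_lt this h2))
        simp only [Complex.sub_re] at this
        linarith [this.1]
      have : ‖F' w x‖ = x ^ (lam - 1) * Real.exp (-w.re * x) * x := by
        rw [show F' w x = ((x:ℂ) ^ ((lam:ℂ) - 1) * Complex.exp (-(w * x))) * (-(x:ℂ)) by
          simp [hF'_def]; ring, norm_mul, watson_norm_c hx w]
        simp [abs_of_pos hx]
      rw [this]
      have h1 : x ^ (lam - 1) * Real.exp (-w.re * x) * x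
          = x ^ lam * Real.exp (-w.re * x) := by
        rw [mul_comm (x ^ (lam-1)) _, mul_assoc, ← Real.rpow_add_one hx.ne' (lam - 1)]
        ring_nf
      rw [h1]
      have : Real.exp (-w.re * x) ≤ Real.exp (-(q.re/2) * x) := by
        apply Real.exp_le_exp.mpr
        nlinarith
      have hx0 : 0 ≤ x ^ lam := Real.rpow_nonneg hx.le lam
      nlinarith
    · exact watson_int_real (by linarith) (by linarith)
    · filter_upwards [ae_restrict_mem measurableSet_Ioi] with x hx
      intro w hw
      have hd : HasDerivAt (fun w : ℂ => -(w * (x:ℂ))) (-(x:ℂ)) w := by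
        have h := ((hasDerivAt_id w).mul_const (x:ℂ)).neg
        simp only [id, one_mul] at h
        exact h
      simpa [hF'_def] using hd.cexp.const_mul ((x:ℂ) ^ ((lam:ℂ) - 1))
  have hGan : AnalyticOnNhd ℂ G {z : ℂ | 0 < z.re} := by
    refine DifferentiableOn.analyticOnNhd (fun q hq => ?_) hU
    refine (DifferentiableAt.const_mul ?_ _).differentiableWithinAt
    exact (hasDerivAt_id q).cpow_const (Or.inl hq) |>.differentiableAt
  have hreal : ∀ r : ℝ, 0 < r → F r = G r := by
    intro r hr
    have h0 := Complex.integral_cpow_mul_exp_neg_mul_Ioi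
      (a := (lam:ℂ)) (by simpa using hlam) hr
    have : F r = (1 / (r:ℂ)) ^ (lam:ℂ) * Complex.Gamma lam := by rw [← h0]
    rw [this, hG_def, one_div, Complex.inv_cpow _ _
      (by rw [Complex.arg_ofReal_of_nonneg hr.le]; exact Real.pi_ne_zero.symm),
      ← Complex.cpow_neg, mul_comm]
  have hfreq : ∃ᶠ z in nhdsWithin (1:ℂ) {(1:ℂ)}ᶜ, F z = G z := by
    have htend : Tendsto (fun n : ℕ => ((1 + 1/((n:ℝ)+1) : ℝ) : ℂ)) atTop
        (nhdsWithin (1:ℂ) {(1:ℂ)}ᶜ) := by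
      rw [tendsto_nhdsWithin_iff]
      constructor
      · have : Tendsto (fun n : ℕ => (1 + 1/((n:ℝ)+1) : ℝ)) atTop (nhds 1) := by
          simpa using (tendsto_const_nhds : Tendsto (fun _ : ℕ => (1:ℝ)) atTop (nhds 1)).add tendsto_one_div_add_atTop_nhds_zero_nat
        have h2 := (Complex.continuous_ofReal.tendsto 1).comp this
        rw [Complex.ofReal_one] at h2
        exact h2
      · refine Eventually.of_forall fun n => ?_
        simp only [mem_compl_iff, mem_singleton_iff]
        intro h
        have : (1 + 1/((n:ℝ)+1) : ℝ) = 1 := by exact_mod_cast h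
        have hpos : 0 < 1/((n:ℝ)+1) := by positivity
        linarith
    exact htend.frequently (Frequently.of_forall fun n => hreal _ (by positivity))
  have := AnalyticOnNhd.eqOn_of_preconnected_of_frequently_eq hFan hGan
    (convex_halfSpace_re_gt 0).isPreconnected (by norm_num : (1:ℂ) ∈ {z : ℂ | 0 < z.re}) hfreq
  exact this hp


/-- Watson's lemma: if `f : (0,∞) → ℂ` is continuous, admits the asymptotic expansion
`f(x) ∼ Σ aₙ x^{λₙ-1}` as `x → 0+` (in the sense of Poincaré), and grows at most
exponentially, then for every `N ≥ 1` and `δ ∈ (0,π/2)` there are `C, R > 0` so that for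
`|p| ≥ R`, `|arg p| ≤ π/2 - δ`, the Laplace transform `∫₀^∞ e^{-xp} f(x) dx` converges
absolutely and equals `Σ_{n<N} aₙ Γ(λₙ) p^{-λₙ}` up to an error of size `C |p|^{-λ_N}`. -/
theorem stmt_3 (f : ℝ → ℂ) (hf : ContinuousOn f (Set.Ioi 0))
    (l : ℕ → ℝ) (hl : StrictMono l) (hl0 : 0 < l 0) (a : ℕ → ℂ)
    (hasymp : ∀ N : ℕ, 1 ≤ N → ∃ C x₀ : ℝ, 0 < C ∧ 0 < x₀ ∧
      ∀ x : ℝ, 0 < x → x ≤ x₀ →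
        ‖f x - ∑ n ∈ Finset.range N, a n * ((x ^ (l n - 1) : ℝ) : ℂ)‖ ≤ C * x ^ (l N - 1))
    (hgrow : ∃ M c : ℝ, 0 < M ∧ 0 < c ∧ ∀ x : ℝ, 0 < x → ‖f x‖ ≤ M * Real.exp (c * x)) :
    ∀ N : ℕ, 1 ≤ N → ∀ δ : ℝ, 0 < δ → δ < Real.pi / 2 →
      ∃ C R : ℝ, 0 < C ∧ 0 < R ∧ ∀ p : ℂ, R ≤ ‖p‖ → |p.arg| ≤ Real.pi / 2 - δ →
        IntegrableOn (fun x : ℝ => Complex.exp (-(x : ℂ) * p) * f x) (Set.Ioi 0) ∧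
        ‖(∫ x in Set.Ioi (0 : ℝ), Complex.exp (-(x : ℂ) * p) * f x) -
            ∑ n ∈ Finset.range N, a n * (Real.Gamma (l n) : ℂ) * p ^ (-(l n : ℂ))‖ ≤
          C * ‖p‖ ^ (-(l N)) := by
  intro N hN δ hδ1 hδ2
  obtain ⟨C₁, x₀, hC₁, hx₀, hbound⟩ := hasymp N hN
  obtain ⟨M, c, hM, hc, hMc⟩ := hgrow
  have hlpos : ∀ n : ℕ, 0 < l n := fun n => hl0.trans_le (hl.monotone (Nat.zero_le n))
  set s : ℝ := Real.sin δ with hs_def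
  have hs : 0 < s := Real.sin_pos_of_pos_of_lt_pi hδ1 (by linarith [Real.pi_pos])
  set c' : ℝ := max c 1 with hc'_def
  have hc'1 : (1:ℝ) ≤ c' := le_max_right _ _
  have hc'c : c ≤ c' := le_max_left _ _
  set R : ℝ := max ((2*(c'+1))/s) 1 with hR_def
  have hRpos : 0 < R := lt_of_lt_of_le one_pos (le_max_right _ _)
  obtain ⟨B, hB, hBle⟩ := watson_tail_bound (l N) (s * x₀ / 2) R (by positivity) hRpos
  have hBnex : ∀ n : ℕ, ∃ Bn : ℝ, 0 < Bn ∧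
      ∀ t : ℝ, x₀ ≤ t → t ^ (l n - 1) * Real.exp (-1 * t) ≤ Bn :=
    fun n => watson_tail_bound (l n - 1) 1 x₀ one_pos hx₀
  choose Bn hBn1 hBn2 using hBnex
  set K : ℝ := M + ∑ n ∈ Finset.range N, ‖a n‖ * Bn n with hK_def
  have hK0 : 0 < K := add_pos_of_pos_of_nonneg hM
    (Finset.sum_nonneg fun n _ => mul_nonneg (norm_nonneg _) (hBn1 n).le)
  set Γs : ℝ := Real.Gamma (l N) with hΓ_def
  have hΓ : 0 < Γs := Real.Gamma_pos_of_pos (hlpos N)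
  refine ⟨C₁ * Γs * s ^ (-(l N)) + K * B, R, by positivity, hRpos, fun p hpR hparg => ?_⟩
  have hpnorm : 0 < ‖p‖ := lt_of_lt_of_le hRpos hpR
  have hp0 : p ≠ 0 := by
    intro h; rw [h, norm_zero] at hpnorm; exact lt_irrefl _ hpnorm
  -- real part lower bound
  have hre : s * ‖p‖ ≤ p.re := by
    have h1 : Real.cos (Real.pi/2 - δ) ≤ Real.cos |p.arg| := by
      apply Real.cos_le_cos_of_nonneg_of_le_pi (abs_nonneg _) (by linarith [Real.pi_pos]) hparg
    rw [Real.cos_pi_div_two_sub, Real.cos_abs, Complex.cos_arg hp0] at h1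
    have h2 : ‖p‖ = ‖p‖ := rfl
    rw [← h2] at h1
    calc s * ‖p‖ ≤ (p.re / ‖p‖) * ‖p‖ := by
          apply mul_le_mul_of_nonneg_right h1 (norm_nonneg p)
      _ = p.re := div_mul_cancel₀ _ (ne_of_gt hpnorm)
  have hrepos : 0 < p.re := lt_of_lt_of_le (by positivity) hre
  have hsp : 2*(c'+1) ≤ s * ‖p‖ := by
    have h1 : (2*(c'+1))/s ≤ ‖p‖ := le_trans (le_max_left _ _) hpR
    have := (div_le_iff₀ hs).mp h1
    linarith [this]
  have hb1 : c' + 1 ≤ p.re - c' := by linarith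
  have hbpos : (0:ℝ) < p.re - c' := by linarith
  have hb2 : s * ‖p‖ / 2 ≤ p.re - c' := by linarith
  have hprec : (0:ℝ) < p.re - c := by linarith
  -- norm of the exponential factor
  have hnexp : ∀ x : ℝ, ‖Complex.exp (-(x:ℂ) * p)‖ = Real.exp (-p.re * x) := by
    intro x
    rw [Complex.norm_exp]
    congr 1
    simp [Complex.mul_re]
    ring
  -- term conversion
  have hterm : ∀ (r : ℝ) (x : ℝ), 0 < x →
      ((x ^ (r - 1) : ℝ) : ℂ) = (x:ℂ) ^ ((r:ℂ) - 1) := by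
    intro r x hx
    rw [Complex.ofReal_cpow hx.le]
    norm_num
  -- continuity / measurability of the integrand
  have hcont : ContinuousOn (fun x : ℝ => Complex.exp (-(x:ℂ) * p) * f x) (Set.Ioi 0) := by
    apply ContinuousOn.mul ?_ hf
    exact (Complex.continuous_exp.comp
      ((Complex.continuous_ofReal.neg).mul continuous_const)).continuousOn
  -- integrability of each expansion term
  have hIntTerm : ∀ n : ℕ, IntegrableOn
      (fun x : ℝ => Complex.exp (-(x:ℂ) * p) * (a n * ((x ^ (l n - 1) : ℝ) : ℂ)))
      (Set.Ioi 0) := by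
    intro n
    refine IntegrableOn.congr_fun ((watson_int_c (hlpos n) hrepos).const_mul (a n))
      (fun x hx => ?_) measurableSet_Ioi
    rw [hterm (l n) x hx]
    rw [show -(p * (x:ℂ)) = -(x:ℂ) * p by ring]
    ring
  -- integrability of the full integrand
  have hfnorm : ∀ x : ℝ, 0 < x →
      ‖f x‖ ≤ C₁ * x ^ (l N - 1) +
        ∑ n ∈ Finset.range N, ‖a n‖ * x ^ (l n - 1) ∨ True := fun _ _ => Or.inr trivial
  have hsumnorm : ∀ x : ℝ, 0 < x →
      ‖∑ n ∈ Finset.range N, a n * ((x ^ (l n - 1) : ℝ) : ℂ)‖ ≤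
        ∑ n ∈ Finset.range N, ‖a n‖ * x ^ (l n - 1) := by
    intro x hx
    refine le_trans (norm_sum_le _ _) (Finset.sum_le_sum fun n _ => ?_)
    rw [norm_mul, Complex.norm_real, Real.norm_eq_abs,
      _root_.abs_of_nonneg (Real.rpow_nonneg hx.le _)]
  have hIoc : IntegrableOn (fun x : ℝ => Complex.exp (-(x:ℂ) * p) * f x) (Set.Ioc 0 x₀) := by
    refine Integrable.mono'
      (g := fun x : ℝ => C₁ * (x ^ (l N - 1) * Real.exp (-p.re * x)) +
        ∑ n ∈ Finset.range N, ‖a n‖ * (x ^ (l n - 1) * Real.exp (-p.re * x))) ?_ ?_ ?_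
    · refine IntegrableOn.mono_set ?_ Set.Ioc_subset_Ioi_self
      exact (((watson_int_real (lam := l N - 1) (by linarith [hlpos N]) hrepos).const_mul C₁).add
        (integrable_finset_sum _ fun n _ =>
          (watson_int_real (lam := l n - 1) (by linarith [hlpos n]) hrepos).const_mul ‖a n‖))
    · exact (hcont.mono Set.Ioc_subset_Ioi_self).aestronglyMeasurable measurableSet_Ioc
    · filter_upwards [ae_restrict_mem measurableSet_Ioc] with x hx
      have hx0 : 0 < x := hx.1
      have hfb : ‖f x‖ ≤ C₁ * x ^ (l N - 1) +
          ∑ n ∈ Finset.range N, ‖a n‖ * x ^ (l n - 1) := by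
        have h1 := hbound x hx0 hx.2
        have h2 := hsumnorm x hx0
        calc ‖f x‖ = ‖(f x - ∑ n ∈ Finset.range N, a n * ((x ^ (l n - 1) : ℝ) : ℂ)) +
            ∑ n ∈ Finset.range N, a n * ((x ^ (l n - 1) : ℝ) : ℂ)‖ := by rw [sub_add_cancel]
          _ ≤ ‖f x - ∑ n ∈ Finset.range N, a n * ((x ^ (l n - 1) : ℝ) : ℂ)‖ +
            ‖∑ n ∈ Finset.range N, a n * ((x ^ (l n - 1) : ℝ) : ℂ)‖ := norm_add_le _ _
          _ ≤ _ := by gcongr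
      calc ‖Complex.exp (-(x:ℂ) * p) * f x‖ = Real.exp (-p.re * x) * ‖f x‖ := by
            rw [norm_mul, hnexp x]
        _ ≤ Real.exp (-p.re * x) * (C₁ * x ^ (l N - 1) +
            ∑ n ∈ Finset.range N, ‖a n‖ * x ^ (l n - 1)) := by
            exact mul_le_mul_of_nonneg_left hfb (Real.exp_pos _).le
        _ = C₁ * (x ^ (l N - 1) * Real.exp (-p.re * x)) +
            ∑ n ∈ Finset.range N, ‖a n‖ * (x ^ (l n - 1) * Real.exp (-p.re * x)) := by
            rw [mul_add, Finset.mul_sum]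
            congr 1
            · ring
            · exact Finset.sum_congr rfl fun n _ => by ring
  have hIoiInt : IntegrableOn (fun x : ℝ => Complex.exp (-(x:ℂ) * p) * f x) (Set.Ioi x₀) := by
    refine Integrable.mono' (g := fun x : ℝ => M * Real.exp (-(p.re - c) * x)) ?_ ?_ ?_
    · exact (exp_neg_integrableOn_Ioi x₀ hprec).const_mul M
    · exact (hcont.mono fun x hx => lt_trans hx₀ hx).aestronglyMeasurable measurableSet_Ioi
    · filter_upwards [ae_restrict_mem measurableSet_Ioi] with x hx
      have hx0 : 0 < x := lt_trans hx₀ hx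
      calc ‖Complex.exp (-(x:ℂ) * p) * f x‖ = Real.exp (-p.re * x) * ‖f x‖ := by
            rw [norm_mul, hnexp x]
        _ ≤ Real.exp (-p.re * x) * (M * Real.exp (c * x)) :=
            mul_le_mul_of_nonneg_left (hMc x hx0) (Real.exp_pos _).le
        _ = M * Real.exp (-(p.re - c) * x) := by
            rw [mul_left_comm, ← Real.exp_add]
            congr 2
            ring
  have hIntf : IntegrableOn (fun x : ℝ => Complex.exp (-(x:ℂ) * p) * f x) (Set.Ioi 0) := by
    rw [← Set.Ioc_union_Ioi_eq_Ioi hx₀.le]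
    exact hIoc.union hIoiInt
  refine ⟨hIntf, ?_⟩
  -- the remainder function
  set g : ℝ → ℂ := fun x =>
    Complex.exp (-(x:ℂ) * p) *
      (f x - ∑ n ∈ Finset.range N, a n * ((x ^ (l n - 1) : ℝ) : ℂ)) with hg_def
  have hg_eq : g = fun x : ℝ => Complex.exp (-(x:ℂ) * p) * f x -
      ∑ n ∈ Finset.range N,
        Complex.exp (-(x:ℂ) * p) * (a n * ((x ^ (l n - 1) : ℝ) : ℂ)) := by
    funext x
    simp only [hg_def, mul_sub, Finset.mul_sum]
  have hIntg : IntegrableOn g (Set.Ioi 0) := by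
    rw [hg_eq]
    exact hIntf.sub (integrable_finset_sum _ fun n _ => hIntTerm n)
  -- identity
  have hIdent : (∫ x in Set.Ioi (0:ℝ), Complex.exp (-(x:ℂ) * p) * f x) -
      ∑ n ∈ Finset.range N, a n * (Real.Gamma (l n) : ℂ) * p ^ (-(l n : ℂ)) =
      ∫ x in Set.Ioi (0:ℝ), g x := by
    rw [hg_eq, integral_sub hIntf (integrable_finset_sum _ fun n _ => hIntTerm n),
      integral_finset_sum _ fun n _ => hIntTerm n]
    congr 1
    refine Finset.sum_congr rfl fun n _ => ?_
    symm
    calc ∫ x in Set.Ioi (0:ℝ), Complex.exp (-(x:ℂ) * p) * (a n * ((x ^ (l n - 1) : ℝ) : ℂ))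
        = ∫ x in Set.Ioi (0:ℝ), a n * ((x:ℂ) ^ ((l n : ℂ) - 1) * Complex.exp (-(p * x))) := by
          refine setIntegral_congr_fun measurableSet_Ioi fun x hx => ?_
          rw [hterm (l n) x hx, show -(p * (x:ℂ)) = -(x:ℂ) * p by ring]
          ring
      _ = a n * ∫ x in Set.Ioi (0:ℝ), (x:ℂ) ^ ((l n : ℂ) - 1) * Complex.exp (-(p * x)) :=
          integral_const_mul _ _
      _ = a n * (Complex.Gamma (l n) * p ^ (-(l n : ℂ))) := by
          rw [watson_laplace (hlpos n) hrepos]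
      _ = a n * (Real.Gamma (l n) : ℂ) * p ^ (-(l n : ℂ)) := by
          rw [Complex.Gamma_ofReal]
          ring
  rw [hIdent]
  -- split the norm integral
  have hIntgIoc : IntegrableOn g (Set.Ioc 0 x₀) := hIntg.mono_set Set.Ioc_subset_Ioi_self
  have hIntgIoi : IntegrableOn g (Set.Ioi x₀) :=
    hIntg.mono_set fun x hx => lt_trans hx₀ hx
  have hnormsplit : (∫ x in Set.Ioi (0:ℝ), ‖g x‖) =
      (∫ x in Set.Ioc (0:ℝ) x₀, ‖g x‖) + ∫ x in Set.Ioi x₀, ‖g x‖ := by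
    rw [← setIntegral_union (Set.Ioc_disjoint_Ioi le_rfl) measurableSet_Ioi
      hIntgIoc.norm hIntgIoi.norm, Set.Ioc_union_Ioi_eq_Ioi hx₀.le]
  -- piece A
  have hA : (∫ x in Set.Ioc (0:ℝ) x₀, ‖g x‖) ≤ C₁ * Γs * s ^ (-(l N)) * ‖p‖ ^ (-(l N)) := by
    have h1 : (∫ x in Set.Ioc (0:ℝ) x₀, ‖g x‖) ≤
        ∫ x in Set.Ioc (0:ℝ) x₀, C₁ * (x ^ (l N - 1) * Real.exp (-p.re * x)) := by
      refine setIntegral_mono_on hIntgIoc.norm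
        (IntegrableOn.mono_set
          ((watson_int_real (lam := l N - 1) (by linarith [hlpos N]) hrepos).const_mul C₁)
          Set.Ioc_subset_Ioi_self) measurableSet_Ioc fun x hx => ?_
      have hx0 : 0 < x := hx.1
      calc ‖g x‖ = Real.exp (-p.re * x) *
            ‖f x - ∑ n ∈ Finset.range N, a n * ((x ^ (l n - 1) : ℝ) : ℂ)‖ := by
            simp only [hg_def]
            rw [norm_mul, hnexp x]
        _ ≤ Real.exp (-p.re * x) * (C₁ * x ^ (l N - 1)) :=
            mul_le_mul_of_nonneg_left (hbound x hx0 hx.2) (Real.exp_pos _).le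
        _ = C₁ * (x ^ (l N - 1) * Real.exp (-p.re * x)) := by ring
    have h2 : (∫ x in Set.Ioc (0:ℝ) x₀, C₁ * (x ^ (l N - 1) * Real.exp (-p.re * x))) ≤
        ∫ x in Set.Ioi (0:ℝ), C₁ * (x ^ (l N - 1) * Real.exp (-p.re * x)) := by
      refine setIntegral_mono_set
        ((watson_int_real (lam := l N - 1) (by linarith [hlpos N]) hrepos).const_mul C₁) ?_
        (HasSubset.Subset.eventuallyLE Set.Ioc_subset_Ioi_self)
      filter_upwards [ae_restrict_mem measurableSet_Ioi] with x hx
      have hx0 : 0 < x := hx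
      positivity
    have h3 : (∫ x in Set.Ioi (0:ℝ), C₁ * (x ^ (l N - 1) * Real.exp (-p.re * x))) =
        C₁ * ((1/p.re) ^ (l N) * Γs) := by
      rw [integral_const_mul]
      congr 1
      rw [← Real.integral_rpow_mul_exp_neg_mul_Ioi (hlpos N) hrepos]
      refine setIntegral_congr_fun measurableSet_Ioi fun x hx => ?_
      rw [neg_mul]
    have h4 : (1/p.re) ^ (l N) ≤ s ^ (-(l N)) * ‖p‖ ^ (-(l N)) := by
      have h5 : (1/(s * ‖p‖)) ^ (l N) = s ^ (-(l N)) * ‖p‖ ^ (-(l N)) := by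
        rw [one_div, Real.inv_rpow (by positivity), ← Real.rpow_neg (by positivity),
          Real.mul_rpow hs.le (norm_nonneg p)]
      rw [← h5]
      apply Real.rpow_le_rpow (by positivity) ?_ (hlpos N).le
      apply one_div_le_one_div_of_le (by positivity) hre
    calc (∫ x in Set.Ioc (0:ℝ) x₀, ‖g x‖) ≤ C₁ * ((1/p.re) ^ (l N) * Γs) :=
          le_trans h1 (le_trans h2 (le_of_eq h3))
      _ ≤ C₁ * ((s ^ (-(l N)) * ‖p‖ ^ (-(l N))) * Γs) := by
          apply mul_le_mul_of_nonneg_left ?_ hC₁.le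
          exact mul_le_mul_of_nonneg_right h4 hΓ.le
      _ = C₁ * Γs * s ^ (-(l N)) * ‖p‖ ^ (-(l N)) := by ring
  -- piece B
  have hgtail : ∀ x : ℝ, x₀ ≤ x → ‖g x‖ ≤ K * Real.exp (-(p.re - c') * x) := by
    intro x hx
    have hx0 : 0 < x := lt_of_lt_of_le hx₀ hx
    have hfx : ‖f x‖ ≤ M * Real.exp (c' * x) := by
      refine le_trans (hMc x hx0) ?_
      apply mul_le_mul_of_nonneg_left ?_ hM.le
      exact Real.exp_le_exp.mpr (mul_le_mul_of_nonneg_right hc'c hx0.le)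
    have hterm2 : ∀ n : ℕ, x ^ (l n - 1) ≤ Bn n * Real.exp (c' * x) := by
      intro n
      have h1 := hBn2 n x hx
      have h2 : x ^ (l n - 1) = (x ^ (l n - 1) * Real.exp (-1 * x)) * Real.exp x := by
        rw [mul_assoc, ← Real.exp_add]
        norm_num
      rw [h2]
      calc (x ^ (l n - 1) * Real.exp (-1 * x)) * Real.exp x ≤ Bn n * Real.exp x :=
            mul_le_mul_of_nonneg_right h1 (Real.exp_pos _).le
        _ ≤ Bn n * Real.exp (c' * x) := by
            apply mul_le_mul_of_nonneg_left ?_ (hBn1 n).le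
            apply Real.exp_le_exp.mpr
            nlinarith
    have hgx : ‖f x - ∑ n ∈ Finset.range N, a n * ((x ^ (l n - 1) : ℝ) : ℂ)‖ ≤
        K * Real.exp (c' * x) := by
      calc ‖f x - ∑ n ∈ Finset.range N, a n * ((x ^ (l n - 1) : ℝ) : ℂ)‖ ≤
          ‖f x‖ + ‖∑ n ∈ Finset.range N, a n * ((x ^ (l n - 1) : ℝ) : ℂ)‖ := norm_sub_le _ _
        _ ≤ M * Real.exp (c' * x) +
            ∑ n ∈ Finset.range N, ‖a n‖ * x ^ (l n - 1) := by
            exact add_le_add hfx (hsumnorm x hx0)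
        _ ≤ M * Real.exp (c' * x) +
            ∑ n ∈ Finset.range N, ‖a n‖ * (Bn n * Real.exp (c' * x)) := by
            gcongr with n hn
            exact hterm2 n
        _ = K * Real.exp (c' * x) := by
            rw [hK_def, add_mul, Finset.sum_mul]
            congr 1
            exact Finset.sum_congr rfl fun n _ => by ring
    calc ‖g x‖ = Real.exp (-p.re * x) *
          ‖f x - ∑ n ∈ Finset.range N, a n * ((x ^ (l n - 1) : ℝ) : ℂ)‖ := by
          simp only [hg_def]
          rw [norm_mul, hnexp x]
      _ ≤ Real.exp (-p.re * x) * (K * Real.exp (c' * x)) :=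
          mul_le_mul_of_nonneg_left hgx (Real.exp_pos _).le
      _ = K * Real.exp (-(p.re - c') * x) := by
          rw [mul_left_comm, ← Real.exp_add]
          congr 2
          ring
  have hB1 : (∫ x in Set.Ioi x₀, ‖g x‖) ≤ K * Real.exp (-(p.re - c') * x₀) := by
    have hIntExp : IntegrableOn (fun x : ℝ => K * Real.exp (-(p.re - c') * x))
        (Set.Ioi x₀) := (exp_neg_integrableOn_Ioi x₀ hbpos).const_mul K
    have h1 : (∫ x in Set.Ioi x₀, ‖g x‖) ≤
        ∫ x in Set.Ioi x₀, K * Real.exp (-(p.re - c') * x) :=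
      setIntegral_mono_on hIntgIoi.norm hIntExp measurableSet_Ioi
        fun x hx => hgtail x (le_of_lt hx)
    have h2 : (∫ x in Set.Ioi x₀, K * Real.exp (-(p.re - c') * x)) ≤
        ∫ x in Set.Ioi x₀, (K * Real.exp (-(p.re - c' - 1) * x₀)) * Real.exp (-x) := by
      refine setIntegral_mono_on hIntExp
        (IntegrableOn.congr_fun ((exp_neg_integrableOn_Ioi x₀ one_pos).const_mul
            (K * Real.exp (-(p.re - c' - 1) * x₀)))
          (fun x _ => by norm_num) measurableSet_Ioi) measurableSet_Ioi
        fun x hx => ?_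
      have hxge : x₀ ≤ x := le_of_lt hx
      rw [mul_assoc, ← Real.exp_add]
      apply mul_le_mul_of_nonneg_left ?_ hK0.le
      apply Real.exp_le_exp.mpr
      have key : (p.re - c' - 1) * x₀ ≤ (p.re - c' - 1) * x :=
        mul_le_mul_of_nonneg_left hxge (by linarith)
      linarith only [key, hxge]
    have h3 : (∫ x in Set.Ioi x₀, (K * Real.exp (-(p.re - c' - 1) * x₀)) * Real.exp (-x)) =
        K * Real.exp (-(p.re - c') * x₀) := by
      have harg : -(p.re - c' - 1) * x₀ + -x₀ = -(p.re - c') * x₀ := by ring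
      rw [integral_const_mul, integral_exp_neg_Ioi, mul_assoc, ← Real.exp_add, harg]
    exact h1.trans (h2.trans h3.le)
  have hB2 : K * Real.exp (-(p.re - c') * x₀) ≤ K * B * ‖p‖ ^ (-(l N)) := by
    have h1 : Real.exp (-(p.re - c') * x₀) ≤ Real.exp (-(s * x₀ / 2) * ‖p‖) := by
      apply Real.exp_le_exp.mpr
      have key := mul_le_mul_of_nonneg_right hb2 hx₀.le
      linarith only [key]
    have h2 := hBle ‖p‖ hpR
    have h3 : Real.exp (-(s * x₀ / 2) * ‖p‖) ≤ B * ‖p‖ ^ (-(l N)) := by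
      have h4 : Real.exp (-(s * x₀ / 2) * ‖p‖) =
          ‖p‖ ^ (-(l N)) * (‖p‖ ^ (l N) * Real.exp (-(s * x₀ / 2) * ‖p‖)) := by
        rw [← mul_assoc, Real.rpow_neg (norm_nonneg p),
          inv_mul_cancel₀ (ne_of_gt (Real.rpow_pos_of_pos hpnorm _)), one_mul]
      rw [h4]
      calc ‖p‖ ^ (-(l N)) * (‖p‖ ^ (l N) * Real.exp (-(s * x₀ / 2) * ‖p‖)) ≤
          ‖p‖ ^ (-(l N)) * B := by
            apply mul_le_mul_of_nonneg_left ?_ (Real.rpow_nonneg (norm_nonneg p) _)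
            exact h2
        _ = B * ‖p‖ ^ (-(l N)) := mul_comm _ _
    calc K * Real.exp (-(p.re - c') * x₀) ≤ K * (B * ‖p‖ ^ (-(l N))) :=
          mul_le_mul_of_nonneg_left (le_trans h1 h3) hK0.le
      _ = K * B * ‖p‖ ^ (-(l N)) := by ring
  calc ‖∫ x in Set.Ioi (0:ℝ), g x‖ ≤ ∫ x in Set.Ioi (0:ℝ), ‖g x‖ :=
        norm_integral_le_integral_norm _
    _ = (∫ x in Set.Ioc (0:ℝ) x₀, ‖g x‖) + ∫ x in Set.Ioi x₀, ‖g x‖ := hnormsplit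
    _ ≤ C₁ * Γs * s ^ (-(l N)) * ‖p‖ ^ (-(l N)) + K * B * ‖p‖ ^ (-(l N)) :=
        add_le_add hA (le_trans hB1 hB2)
    _ = (C₁ * Γs * s ^ (-(l N)) + K * B) * ‖p‖ ^ (-(l N)) := by ring
end

section
/- Let f, g be Schwartz functions on ℝ with ∫_ℝ g(x) dx = 0, and define the d'Alembert solution of the one-dimensional wave equation u(t,x) := (f(x+t) + f(x−t))/2 + (1/2) ∫_{x−t}^{x+t} g(s) ds. Then for every α ≥ 0 there exists a constant C = C(α, f, g) such that for all t > 0 and all x ∈ ℝ, |u(t,x)| ≤ C (1 + |x|)^{α} t^{−α}. Equivalently, ‖⟨x⟩^{−α} u(t, ·)‖_{L^∞(ℝ)} ≤ C t^{−α} for every α ≥ 0: solutions of the free 1-d wave equation with mean-zero velocity data decay locally at an arbitrary polynomial rate. -/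
open MeasureTheory Set

lemma tail_bound (h : ℝ → ℂ) (n : ℕ) (Cg : ℝ)
    (hdecay : ∀ s : ℝ, ‖s‖ ^ (n + 2) * ‖h s‖ ≤ Cg)
    {b : ℝ} (hb : 1 ≤ b) :
    ‖∫ s in Ioi b, h s‖ ≤ Cg * ((b : ℝ) ^ n)⁻¹ := by
  have hb0 : (0 : ℝ) < b := lt_of_lt_of_le one_pos hb
  have hCg : 0 ≤ Cg := le_trans (by positivity) (hdecay 1)
  have hbn : (0:ℝ) < b ^ n := by positivity
  have key : ‖∫ s in Ioi b, h s‖ ≤ ∫ s in Ioi b, (Cg * (b ^ n)⁻¹) * s ^ (-2 : ℝ) := by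
    apply norm_integral_le_of_norm_le
    · exact ((integrableOn_Ioi_rpow_of_lt (by norm_num) hb0).const_mul _)
    · filter_upwards [ae_restrict_mem measurableSet_Ioi] with s hs
      have hsb : b < s := hs
      have hs0 : (0:ℝ) < s := hb0.trans hsb
      have h1 : ‖h s‖ * (b ^ n * s ^ 2) ≤ Cg := by
        calc ‖h s‖ * (b ^ n * s ^ 2) ≤ ‖h s‖ * (s ^ n * s ^ 2) := by
              apply mul_le_mul_of_nonneg_left _ (norm_nonneg _)
              exact mul_le_mul_of_nonneg_right (pow_le_pow_left₀ hb0.le hsb.le n) (by positivity)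
          _ = ‖s‖ ^ (n + 2) * ‖h s‖ := by
              rw [Real.norm_eq_abs, abs_of_pos hs0, pow_add]; ring
          _ ≤ Cg := hdecay s
      have hs2 : s ^ (-2 : ℝ) = ((s ^ 2 : ℝ))⁻¹ := by
        rw [show (-2 : ℝ) = -(2:ℕ) by norm_num, Real.rpow_neg hs0.le, Real.rpow_natCast]
      rw [hs2, mul_assoc, ← mul_inv, ← div_eq_mul_inv, le_div_iff₀ (by positivity)]
      exact h1
  have hint2 : ∫ s in Ioi b, (Cg * (b ^ n)⁻¹) * s ^ (-2 : ℝ)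
      = (Cg * (b ^ n)⁻¹) * (b⁻¹) := by
    rw [integral_const_mul, integral_Ioi_rpow_of_lt (by norm_num) hb0]
    norm_num [Real.rpow_neg_one]
  refine key.trans ?_
  rw [hint2]
  have : (Cg * (b ^ n)⁻¹) * b⁻¹ ≤ (Cg * (b ^ n)⁻¹) * 1 := by
    apply mul_le_mul_of_nonneg_left _ (by positivity)
    exact inv_le_one_of_one_le₀ hb
  simpa using this

/-- Arbitrary local polynomial decay for the free 1-d wave equation with mean-zero velocity
data: if `f, g` are Schwartz on `ℝ` with `∫ g = 0` and
`u(t,x) = (f(x+t)+f(x-t))/2 + (1/2)∫_{x-t}^{x+t} g`, then for every `α ≥ 0` there is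
`C > 0` with `|u(t,x)| ≤ C (1+|x|)^α t^{-α}` for all `t > 0`, `x ∈ ℝ`. -/
theorem stmt_9 (f g : SchwartzMap ℝ ℂ) (hg : (∫ x : ℝ, g x) = 0) :
    ∀ α : ℝ, 0 ≤ α → ∃ C : ℝ, 0 < C ∧ ∀ t : ℝ, 0 < t → ∀ x : ℝ,
      ‖(f (x + t) + f (x - t)) / 2 + (1 / 2 : ℂ) * ∫ s in (x - t)..(x + t), g s‖ ≤
        C * (1 + |x|) ^ α * t ^ (-α) := by
  intro α hα
  set n : ℕ := ⌈α⌉₊ with hn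
  have hαn : α ≤ (n : ℝ) := Nat.le_ceil α
  -- constants
  obtain ⟨Cf, hCf0, hCf⟩ := f.decay n 0
  simp only [norm_iteratedFDeriv_zero] at hCf
  obtain ⟨Cg, hCg0, hCg⟩ := g.decay (n + 2) 0
  simp only [norm_iteratedFDeriv_zero] at hCg
  obtain ⟨Mf, hMf0, hMf⟩ := f.decay 0 0
  simp only [norm_iteratedFDeriv_zero, pow_zero, one_mul] at hMf
  set Ig : ℝ := ∫ s : ℝ, ‖g s‖ with hIg
  have hIg0 : 0 ≤ Ig := integral_nonneg fun s => norm_nonneg _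
  have hgint : Integrable (fun s : ℝ => g s) := g.integrable
  refine ⟨Mf + Ig + Cf + Cg + 1, by positivity, ?_⟩
  intro t ht x
  set C : ℝ := Mf + Ig + Cf + Cg + 1
  have hq0 : 0 < (1 + |x|) ^ α * t ^ (-α) := by positivity
  have hCpos : (0:ℝ) < C := by positivity
  by_cases hcase : t ≤ 1 + |x|
  · -- small time: uniform bound, and the weight is ≥ 1
    have hq1 : 1 ≤ (1 + |x|) ^ α * t ^ (-α) := by
      have : (1:ℝ) ≤ ((1 + |x|) / t) ^ α := by
        calc (1:ℝ) = 1 ^ α := (Real.one_rpow α).symm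
          _ ≤ ((1 + |x|) / t) ^ α :=
            Real.rpow_le_rpow zero_le_one ((le_div_iff₀ ht).mpr (by linarith)) hα
      calc (1:ℝ) ≤ ((1 + |x|) / t) ^ α := this
        _ = (1 + |x|) ^ α * t ^ (-α) := by
          rw [Real.div_rpow (by positivity) ht.le, Real.rpow_neg ht.le, div_eq_mul_inv]
    have hub : ‖(f (x + t) + f (x - t)) / 2 + (1 / 2 : ℂ) * ∫ s in (x - t)..(x + t), g s‖
        ≤ Mf + Ig := by
      have h1 : ‖(f (x + t) + f (x - t)) / 2‖ ≤ Mf := by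
        rw [norm_div]
        calc ‖f (x + t) + f (x - t)‖ / ‖(2:ℂ)‖ ≤ (Mf + Mf) / ‖(2:ℂ)‖ := by
              apply div_le_div_of_nonneg_right ?_ (by norm_num)
              · exact le_trans (norm_add_le _ _) (add_le_add (hMf _) (hMf _))
          _ = Mf := by norm_num
      have h2 : ‖(1 / 2 : ℂ) * ∫ s in (x - t)..(x + t), g s‖ ≤ Ig := by
        rw [norm_mul]
        have hle : x - t ≤ x + t := by linarith
        have : ‖∫ s in (x - t)..(x + t), g s‖ ≤ Ig := by
          rw [intervalIntegral.integral_of_le hle]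
          calc ‖∫ s in Ioc (x - t) (x + t), g s‖ ≤ ∫ s in Ioc (x - t) (x + t), ‖g s‖ :=
                norm_integral_le_integral_norm _
            _ ≤ Ig := setIntegral_le_integral hgint.norm
                (Filter.Eventually.of_forall fun s => norm_nonneg _)
        calc ‖(1/2 : ℂ)‖ * ‖∫ s in (x - t)..(x + t), g s‖
            ≤ 1 * Ig := by
              apply mul_le_mul (by norm_num) this (norm_nonneg _) zero_le_one
          _ = Ig := one_mul Ig
      calc _ ≤ ‖(f (x + t) + f (x - t)) / 2‖ + ‖(1 / 2 : ℂ) * ∫ s in (x - t)..(x + t), g s‖ :=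
            norm_add_le _ _
        _ ≤ Mf + Ig := add_le_add h1 h2
    calc _ ≤ Mf + Ig := hub
      _ ≤ C * 1 := by simp only [mul_one, C]; linarith
      _ ≤ C * ((1 + |x|) ^ α * t ^ (-α)) := by
          exact mul_le_mul_of_nonneg_left hq1 hCpos.le
      _ = C * (1 + |x|) ^ α * t ^ (-α) := by ring
  · -- large time
    push_neg at hcase
    set r : ℝ := t / (1 + |x|) with hr
    have hx0 : (0:ℝ) < 1 + |x| := by positivity
    have hr1 : 1 ≤ r := (le_div_iff₀ hx0).mpr (by linarith)
    have hr0 : 0 < r := lt_of_lt_of_le one_pos hr1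
    have hrn : (0:ℝ) < r ^ n := by positivity
    -- r ≤ x + t and r ≤ -(x - t)
    have hxt : r ≤ x + t := by
      rw [div_le_iff₀ hx0]
      have h1 : |x| < t := by nlinarith [abs_nonneg x]
      nlinarith [abs_nonneg x, neg_abs_le x, le_abs_self x]
    have hxt' : r ≤ -(x - t) := by
      rw [div_le_iff₀ hx0]
      nlinarith [abs_nonneg x, neg_abs_le x, le_abs_self x]
    have hr1xt : (1:ℝ) ≤ x + t := hr1.trans hxt
    have hr1xt' : (1:ℝ) ≤ -(x - t) := hr1.trans hxt'
    -- pointwise bound on f at points of absolute value ≥ r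
    have hfb : ∀ y : ℝ, r ≤ |y| → ‖f y‖ ≤ Cf * (r ^ n)⁻¹ := by
      intro y hy
      rw [← div_eq_mul_inv, le_div_iff₀ hrn]
      calc ‖f y‖ * r ^ n ≤ ‖f y‖ * |y| ^ n := by
            apply mul_le_mul_of_nonneg_left _ (norm_nonneg _)
            exact pow_le_pow_left₀ hr0.le hy n
        _ = ‖y‖ ^ n * ‖f y‖ := by rw [Real.norm_eq_abs]; ring
        _ ≤ Cf := hCf y
    -- split the interval integral into tails
    have hsplit : (∫ s in (x - t)..(x + t), g s)
        = -(∫ s in Ioi (x + t), g s) - ∫ s in Iic (x - t), g s := by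
      have h1 := intervalIntegral.integral_Iic_sub_Iic (hgint.integrableOn (s := Iic (x - t)))
        (hgint.integrableOn (s := Iic (x + t)))
      have h2 := intervalIntegral.integral_Iic_add_Ioi (b := x + t) (hgint.integrableOn)
        (hgint.integrableOn)
      rw [← h1]
      have : (∫ s in Iic (x + t), g s) = -(∫ s in Ioi (x + t), g s) := by
        exact eq_neg_of_add_eq_zero_left (h2.trans hg)
      rw [this]
    -- tail bounds
    have htail1 : ‖∫ s in Ioi (x + t), g s‖ ≤ Cg * (r ^ n)⁻¹ := by
      calc ‖∫ s in Ioi (x + t), g s‖ ≤ Cg * ((x + t) ^ n)⁻¹ := tail_bound _ n Cg hCg hr1xt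
        _ ≤ Cg * (r ^ n)⁻¹ := by
            apply mul_le_mul_of_nonneg_left _ hCg0.le
            apply inv_anti₀ hrn
            exact pow_le_pow_left₀ hr0.le hxt n
    have htail2 : ‖∫ s in Iic (x - t), g s‖ ≤ Cg * (r ^ n)⁻¹ := by
      have hneg : (∫ s in Iic (x - t), g s) = ∫ s in Ioi (-(x - t)), g (-s) := by
        rw [integral_comp_neg_Ioi, neg_neg]
      rw [hneg]
      calc ‖∫ s in Ioi (-(x - t)), g (-s)‖ ≤ Cg * ((-(x - t)) ^ n)⁻¹ := by
            apply tail_bound (fun s => g (-s)) n Cg _ hr1xt'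
            intro s; simpa using hCg (-s)
        _ ≤ Cg * (r ^ n)⁻¹ := by
            apply mul_le_mul_of_nonneg_left _ hCg0.le
            apply inv_anti₀ hrn
            exact pow_le_pow_left₀ hr0.le hxt' n
    -- combine
    have hmain : ‖(f (x + t) + f (x - t)) / 2 + (1 / 2 : ℂ) * ∫ s in (x - t)..(x + t), g s‖
        ≤ (Cf + Cg) * (r ^ n)⁻¹ := by
      have h1 : ‖(f (x + t) + f (x - t)) / 2‖ ≤ Cf * (r ^ n)⁻¹ := by
        rw [norm_div]
        have hb1 : ‖f (x + t)‖ ≤ Cf * (r ^ n)⁻¹ := hfb _ (hxt.trans (le_abs_self _))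
        have hb2 : ‖f (x - t)‖ ≤ Cf * (r ^ n)⁻¹ := hfb _ (hxt'.trans (neg_le_abs _))
        have : ‖f (x + t) + f (x - t)‖ ≤ 2 * (Cf * (r ^ n)⁻¹) :=
          le_trans (norm_add_le _ _) (by linarith)
        calc ‖f (x + t) + f (x - t)‖ / ‖(2:ℂ)‖ ≤ (2 * (Cf * (r ^ n)⁻¹)) / ‖(2:ℂ)‖ :=
              div_le_div_of_nonneg_right this (by norm_num)
          _ = Cf * (r ^ n)⁻¹ := by norm_num
      have h2 : ‖(1 / 2 : ℂ) * ∫ s in (x - t)..(x + t), g s‖ ≤ Cg * (r ^ n)⁻¹ := by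
        rw [norm_mul, hsplit]
        have : ‖-(∫ s in Ioi (x + t), g s) - ∫ s in Iic (x - t), g s‖
            ≤ 2 * (Cg * (r ^ n)⁻¹) := by
          calc ‖-(∫ s in Ioi (x + t), g s) - ∫ s in Iic (x - t), g s‖
              ≤ ‖∫ s in Ioi (x + t), g s‖ + ‖∫ s in Iic (x - t), g s‖ := by
                apply le_trans (norm_sub_le _ _); rw [norm_neg]
            _ ≤ 2 * (Cg * (r ^ n)⁻¹) := by linarith
        calc ‖(1/2:ℂ)‖ * ‖-(∫ s in Ioi (x + t), g s) - ∫ s in Iic (x - t), g s‖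
            ≤ (1/2) * (2 * (Cg * (r ^ n)⁻¹)) := by
              apply mul_le_mul _ this (norm_nonneg _) (by norm_num)
              · norm_num
          _ = Cg * (r ^ n)⁻¹ := by ring
      calc _ ≤ ‖(f (x + t) + f (x - t)) / 2‖ + ‖(1 / 2 : ℂ) * ∫ s in (x - t)..(x + t), g s‖ :=
            norm_add_le _ _
        _ ≤ (Cf + Cg) * (r ^ n)⁻¹ := by linarith
    -- (r^n)⁻¹ ≤ r^(-α) = (1+|x|)^α t^(-α)
    have hrq : ((r:ℝ) ^ n)⁻¹ ≤ (1 + |x|) ^ α * t ^ (-α) := by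
      have e1 : ((r:ℝ) ^ n)⁻¹ = r ^ (-(n:ℝ)) := by
        rw [Real.rpow_neg hr0.le, Real.rpow_natCast]
      have e2 : r ^ (-(n:ℝ)) ≤ r ^ (-α) :=
        Real.rpow_le_rpow_of_exponent_le hr1 (by linarith)
      have e3 : r ^ (-α) = (1 + |x|) ^ α * t ^ (-α) := by
        rw [Real.rpow_neg hr0.le, Real.rpow_neg ht.le, hr,
          Real.div_rpow ht.le hx0.le, inv_div, div_eq_mul_inv]
      rw [e1]; rw [e3] at e2; exact e2
    calc _ ≤ (Cf + Cg) * (r ^ n)⁻¹ := hmain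
      _ ≤ C * ((1 + |x|) ^ α * t ^ (-α)) := by
          apply mul_le_mul _ hrq (by positivity) hCpos.le
          · simp only [C]; linarith
      _ = C * (1 + |x|) ^ α * t ^ (-α) := by ring
end

section
/- Let ℋ be a complex Hilbert space, let H be a bounded self-adjoint operator on ℋ, let B be a bounded operator on ℋ, and let A : ℝ → B(ℋ) be a family of bounded self-adjoint operators that is differentiable in operator norm with derivative A'(t). Assume there are constants M ≥ 0 and θ > 0 such that (i) ‖A(t)‖ ≤ M for all t, and (ii) for all t ∈ ℝ and all v ∈ ℋ, Re⟨v, (i(A(t)H − H A(t)) + A'(t)) v⟩ ≥ θ ‖Bv‖². Let u₀ ∈ ℋ and u(t) := e^{itH} u₀. Then for every T ≥ 0, ∫₀^T ‖B u(t)‖² dt ≤ (2M/θ) ‖u₀‖². (Positive commutator estimates upgrade to an integrated decay estimate for the propagation observable A.) -/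
open MeasureTheory Complex
open scoped ComplexInnerProductSpace

/-- Positive commutator estimates upgrade to integrated decay: if `H` is bounded
self-adjoint, `A(t)` is a norm-differentiable family of bounded self-adjoint propagation
observables with `‖A(t)‖ ≤ M` and `Re⟨v, (i[A(t),H] + A'(t))v⟩ ≥ θ‖Bv‖²`, then the
evolution `u(t) = e^{itH}u₀` satisfies `∫₀^T ‖Bu(t)‖² dt ≤ (2M/θ)‖u₀‖²`. -/
theorem stmt_11 {ℋ : Type*} [NormedAddCommGroup ℋ] [InnerProductSpace ℂ ℋ] [CompleteSpace ℋ]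
    (H : ℋ →L[ℂ] ℋ) (hH : IsSelfAdjoint H) (B : ℋ →L[ℂ] ℋ)
    (A A' : ℝ → ℋ →L[ℂ] ℋ)
    (hAsa : ∀ t, IsSelfAdjoint (A t))
    (hderiv : ∀ t, HasDerivAt A (A' t) t)
    (M θ : ℝ) (hM : 0 ≤ M) (hθ : 0 < θ)
    (hbound : ∀ t, ‖A t‖ ≤ M)
    (hcomm : ∀ (t : ℝ) (v : ℋ),
      θ * ‖B v‖ ^ 2 ≤ (⟪v, (Complex.I • (A t * H - H * A t) + A' t) v⟫).re)
    (u₀ : ℋ) (u : ℝ → ℋ)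
    (hu : ∀ t : ℝ, u t = NormedSpace.exp ((t : ℂ) • (Complex.I • H)) u₀) :
    ∀ T : ℝ, 0 ≤ T →
      (∫ t in Set.Ioc (0 : ℝ) T, ‖B (u t)‖ ^ 2) ≤ 2 * M / θ * ‖u₀‖ ^ 2 := by
  intro T hT
  set iH : ℋ →L[ℂ] ℋ := Complex.I • H with hiH
  -- derivative of the propagator
  have hUexp : ∀ t : ℝ, HasDerivAt (fun s : ℝ => NormedSpace.exp ((s : ℂ) • iH))
      (iH * NormedSpace.exp ((t : ℂ) • iH)) t := by
    intro t
    have h := hasDerivAt_exp_smul_const' (𝕂 := ℝ) (𝔸 := ℋ →L[ℂ] ℋ) iH t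
    simpa [Complex.coe_smul] using h
  have hueq : u = fun s : ℝ => NormedSpace.exp ((s : ℂ) • iH) u₀ := funext hu
  have hres : ∀ (g g' : ℝ → ℋ →L[ℂ] ℋ) (t : ℝ), HasDerivAt g (g' t) t →
      HasDerivAt (fun s => (g s).restrictScalars ℝ) ((g' t).restrictScalars ℝ) t := by
    intro g g' t hg
    exact (ContinuousLinearMap.restrictScalarsL ℂ ℋ ℋ ℝ ℝ).hasFDerivAt.comp_hasDerivAt t hg
  have huderiv : ∀ t, HasDerivAt u (iH (u t)) t := by
    intro t
    have h := (hres _ (fun s => iH * NormedSpace.exp ((s : ℂ) • iH)) t (hUexp t)).clm_apply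
      (hasDerivAt_const t u₀)
    rw [hueq]
    simpa [ContinuousLinearMap.mul_apply, hu t] using h
  have hucont : Continuous u := by
    rw [continuous_iff_continuousAt]
    exact fun t => (huderiv t).continuousAt
  -- symmetry of H and A t
  have hHsym : ∀ a b : ℋ, ⟪H a, b⟫ = ⟪a, H b⟫ := by
    intro a b
    conv_lhs => rw [← hH.adjoint_eq]
    exact ContinuousLinearMap.adjoint_inner_left H b a
  -- norm conservation
  have hu0 : u 0 = u₀ := by simp [hu 0]
  have hnormsq : ∀ t : ℝ, ‖u t‖ ^ 2 = ‖u₀‖ ^ 2 := by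
    have hg : ∀ t : ℝ, HasDerivAt (fun s => (⟪u s, u s⟫ : ℂ).re) 0 t := by
      intro t
      have h1 := (huderiv t).inner ℂ (huderiv t)
      have h2 := Complex.reCLM.hasFDerivAt.comp_hasDerivAt t h1
      have hz : (⟪u t, iH (u t)⟫ + ⟪iH (u t), u t⟫ : ℂ).re = 0 := by
        have hsw : ⟪H (u t), u t⟫ = ⟪u t, H (u t)⟫ := hHsym _ _
        simp only [hiH, ContinuousLinearMap.smul_apply, inner_smul_right, inner_smul_left,
          Complex.conj_I, hsw]
        ring_nf
        simp
      exact h2.congr_deriv (by rw [Complex.reCLM_apply]; exact hz)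
    have hconst : ∀ t : ℝ, (⟪u t, u t⟫ : ℂ).re = (⟪u 0, u 0⟫ : ℂ).re := by
      intro t
      have := is_const_of_deriv_eq_zero (f := fun s => (⟪u s, u s⟫ : ℂ).re)
        (fun s => (hg s).differentiableAt) (fun s => (hg s).deriv) t 0
      exact this
    intro t
    have := hconst t
    rw [hu0] at this
    rw [← inner_self_eq_norm_sq (𝕜 := ℂ) (u t), ← inner_self_eq_norm_sq (𝕜 := ℂ) u₀]
    exact this
  -- the propagation observable f
  set f : ℝ → ℝ := fun t => (⟪u t, A t (u t)⟫ : ℂ).re with hf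
  have hfderiv : ∀ t, HasDerivAt f
      ((⟪u t, (Complex.I • (A t * H - H * A t) + A' t) (u t)⟫ : ℂ).re) t := by
    intro t
    have hAu : HasDerivAt (fun s => A s (u s)) (A' t (u t) + A t (iH (u t))) t := by
      have h := (hres A A' t (hderiv t)).clm_apply (huderiv t)
      simpa using h
    have h1 := (huderiv t).inner ℂ hAu
    have h2 := Complex.reCLM.hasFDerivAt.comp_hasDerivAt t h1
    have key : ⟪u t, (Complex.I • (A t * H - H * A t) + A' t) (u t)⟫
        = ⟪u t, A' t (u t) + A t (iH (u t))⟫ + ⟪iH (u t), A t (u t)⟫ := by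
      have hsw : ⟪H (u t), A t (u t)⟫ = ⟪u t, H (A t (u t))⟫ := hHsym _ _
      simp only [hiH, ContinuousLinearMap.add_apply, ContinuousLinearMap.smul_apply,
        ContinuousLinearMap.sub_apply, ContinuousLinearMap.mul_apply, _root_.map_smul,
        inner_add_right, inner_smul_right, inner_smul_left, inner_sub_right, Complex.conj_I,
        hsw]
      ring
    rw [key]
    exact h2
  -- bound on |f t|
  have hfbound : ∀ t : ℝ, |f t| ≤ M * ‖u₀‖ ^ 2 := by
    intro t
    have h1 : |f t| ≤ ‖(⟪u t, A t (u t)⟫ : ℂ)‖ := Complex.abs_re_le_norm _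
    have h2 : ‖(⟪u t, A t (u t)⟫ : ℂ)‖ ≤ ‖u t‖ * ‖A t (u t)‖ := norm_inner_le_norm _ _
    have h3 : ‖A t (u t)‖ ≤ ‖A t‖ * ‖u t‖ := (A t).le_opNorm _
    have h4 : ‖A t‖ * ‖u t‖ ≤ M * ‖u t‖ :=
      mul_le_mul_of_nonneg_right (hbound t) (norm_nonneg _)
    calc |f t| ≤ ‖u t‖ * ‖A t (u t)‖ := h1.trans h2
      _ ≤ ‖u t‖ * (M * ‖u t‖) := mul_le_mul_of_nonneg_left (h3.trans h4) (norm_nonneg _)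
      _ = M * ‖u t‖ ^ 2 := by ring
      _ = M * ‖u₀‖ ^ 2 := by rw [hnormsq t]
  -- the integrand
  set φ : ℝ → ℝ := fun t => ‖B (u t)‖ ^ 2 with hφ
  have hφcont : Continuous φ := by
    have : Continuous fun t => ‖B (u t)‖ := (B.continuous.comp hucont).norm
    exact this.pow 2
  set F : ℝ → ℝ := fun t => ∫ s in (0 : ℝ)..t, θ * φ s with hF
  have hFderiv : ∀ t, HasDerivAt F (θ * φ t) t := fun t =>
    ((continuous_const.mul hφcont).integral_hasStrictDerivAt 0 t).hasDerivAt
  -- h = f - F is monotone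
  have hmono : Monotone (fun t => f t - F t) := by
    apply monotone_of_deriv_nonneg
    · exact fun t => ((hfderiv t).sub (hFderiv t)).differentiableAt
    · intro t
      rw [show (fun t => f t - F t) = f - F from rfl, ((hfderiv t).sub (hFderiv t)).deriv]
      have := hcomm t (u t)
      simp only [hφ]
      linarith
  have hmono' := hmono hT
  have hF0 : F 0 = 0 := by simp [hF]
  have hFT : F T ≤ 2 * M * ‖u₀‖ ^ 2 := by
    have h1 : F T ≤ f T - f 0 := by
      have := hmono'
      simp only [hF0] at this
      linarith
    have h2 := abs_le.mp (hfbound T)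
    have h3 := abs_le.mp (hfbound 0)
    linarith [h2.2, h3.1]
  have hFT' : F T = θ * ∫ s in (0 : ℝ)..T, φ s := by
    rw [hF]
    exact intervalIntegral.integral_const_mul θ φ
  have hIoc : (∫ s in (0 : ℝ)..T, φ s) = ∫ t in Set.Ioc (0 : ℝ) T, ‖B (u t)‖ ^ 2 := by
    rw [intervalIntegral.intervalIntegral_eq_integral_uIoc]
    simp [Set.uIoc_of_le hT, hT, hφ]
  have hfinal : θ * (∫ t in Set.Ioc (0 : ℝ) T, ‖B (u t)‖ ^ 2) ≤ 2 * M * ‖u₀‖ ^ 2 := by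
    rw [← hIoc, ← hFT']
    exact hFT
  rw [div_mul_eq_mul_div, le_div_iff₀ hθ]
  linarith
end

section
/- Let V : ℝ → ℝ be continuous with ∫_ℝ (1 + |x|) |V(x)| dx < ∞, and let f : ℝ → ℝ be twice continuously differentiable with −f'' + V f = 0 on ℝ. If f is bounded on ℝ, then the limits lim_{x→+∞} f(x) and lim_{x→−∞} f(x) exist and are finite, and f'(x) → 0 as x → ±∞. (Hence a zero-energy resonance, i.e. a nonzero solution of H f = 0 which is asymptotic to constants at both ends, is equivalently characterized by a nonzero bounded solution f ∈ L^∞(ℝ).) -/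
open MeasureTheory

open MeasureTheory Filter Set

lemma split_Ioi {h : ℝ → ℝ} (hh : Integrable h) {a b : ℝ} (hab : a ≤ b) :
    ∫ t in Set.Ioi a, h t = (∫ t in a..b, h t) + ∫ t in Set.Ioi b, h t := by
  rw [intervalIntegral.integral_of_le hab, ← Set.Ioc_union_Ioi_eq_Ioi hab,
    setIntegral_union (Set.Ioc_disjoint_Ioi le_rfl) measurableSet_Ioi
      (hh.integrableOn) (hh.integrableOn)]

lemma tail_tendsto {h : ℝ → ℝ} (hh : Integrable h) :
    Tendsto (fun x => ∫ t in Set.Ioi x, h t) atTop (nhds 0) := by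
  have h1 : Tendsto (fun x => ∫ t in (0:ℝ)..x, h t) atTop (nhds (∫ t in Set.Ioi (0:ℝ), h t)) :=
    intervalIntegral_tendsto_integral_Ioi 0 hh.integrableOn tendsto_id
  have h2 : Tendsto (fun x => (∫ t in Set.Ioi (0:ℝ), h t) - ∫ t in (0:ℝ)..x, h t) atTop
      (nhds ((∫ t in Set.Ioi (0:ℝ), h t) - ∫ t in Set.Ioi (0:ℝ), h t)) :=
    tendsto_const_nhds.sub h1
  rw [sub_self] at h2
  refine h2.congr' ?_
  filter_upwards [eventually_ge_atTop (0:ℝ)] with x hx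
  rw [split_Ioi hh hx]; ring

lemma aux_top (V : ℝ → ℝ) (hVc : Continuous V)
    (hVint : Integrable (fun x : ℝ => (1 + |x|) * |V x|))
    (f : ℝ → ℝ) (hf : ContDiff ℝ 2 f)
    (hfeq : ∀ x, -(deriv (deriv f) x) + V x * f x = 0)
    (M : ℝ) (hM : ∀ x, |f x| ≤ M) :
    (∃ L : ℝ, Tendsto f atTop (nhds L)) ∧ Tendsto (deriv f) atTop (nhds 0) := by
  have hM0 : 0 ≤ M := le_trans (abs_nonneg _) (hM 0)
  set g : ℝ → ℝ := fun x => V x * f x with hgdef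
  have hfc : Continuous f := hf.continuous
  have hgc : Continuous g := hVc.mul hfc
  have hgg : deriv (deriv f) = g := by
    funext x
    have := hfeq x
    simp only [hgdef]
    linarith
  have h2 : ContDiff ℝ ((1:ℕ) + 1) f := by norm_num; exact_mod_cast hf
  have hder := contDiff_succ_iff_deriv.mp h2
  have hdf : Differentiable ℝ f := hder.1
  have hdf1 : ContDiff ℝ 1 (deriv f) := by exact_mod_cast hder.2.2
  have hdfc : Continuous (deriv f) := hdf1.continuous
  have hddf : Differentiable ℝ (deriv f) := hdf1.differentiable one_ne_zero
  -- FTC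
  have hftc' : ∀ a b : ℝ, ∫ t in a..b, g t = deriv f b - deriv f a := by
    intro a b
    rw [← hgg]
    exact intervalIntegral.integral_deriv_eq_sub (fun x _ => hddf x)
      (by rw [hgg]; exact hgc.intervalIntegrable a b)
  have hftc : ∀ a b : ℝ, ∫ t in a..b, deriv f t = f b - f a := fun a b =>
    intervalIntegral.integral_deriv_eq_sub (fun x _ => hdf x) (hdfc.intervalIntegrable a b)
  -- integrability
  have hgint : Integrable g := by
    refine (hVint.const_mul M).mono' hgc.aestronglyMeasurable (ae_of_all _ fun x => ?_)
    have h1 : ‖g x‖ = |V x| * |f x| := by rw [Real.norm_eq_abs, hgdef, abs_mul]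
    rw [h1]
    nlinarith [mul_nonneg (abs_nonneg (V x)) (sub_nonneg.mpr (hM x)),
      mul_nonneg (mul_nonneg hM0 (abs_nonneg x)) (abs_nonneg (V x))]
  have htg : Integrable (fun x => x * g x) := by
    refine (hVint.const_mul M).mono'
      (continuous_id.mul hgc).aestronglyMeasurable (ae_of_all _ fun x => ?_)
    have h1 : ‖x * g x‖ = |x| * (|V x| * |f x|) := by
      rw [Real.norm_eq_abs, hgdef, abs_mul, abs_mul]
    rw [h1]
    nlinarith [mul_nonneg (mul_nonneg (abs_nonneg x) (abs_nonneg (V x))) (sub_nonneg.mpr (hM x)),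
      mul_nonneg hM0 (abs_nonneg (V x)), abs_nonneg x, abs_nonneg (V x),
      mul_nonneg (mul_nonneg hM0 (abs_nonneg x)) (abs_nonneg (V x))]
  -- limit of deriv f
  set c : ℝ := deriv f 0 + ∫ t in Set.Ioi (0:ℝ), g t with hcdef
  have hcf : Tendsto (deriv f) atTop (nhds c) := by
    have h1 : Tendsto (fun x : ℝ => deriv f 0 + ∫ t in (0:ℝ)..x, g t) atTop (nhds c) :=
      tendsto_const_nhds.add (intervalIntegral_tendsto_integral_Ioi 0 hgint.integrableOn tendsto_id)
    refine h1.congr fun x => ?_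
    rw [hftc' 0 x]; ring
  have hc0 : c = 0 := by
    by_contra hc
    have hcpos : 0 < |c| := abs_pos.mpr hc
    obtain ⟨A, hA⟩ := (eventually_atTop).mp ((Metric.tendsto_nhds.mp hcf) (|c| / 2) (by positivity))
    set b : ℝ := A + (4 * M + 4) / (|c| / 2) with hbdef
    have hbA : b - A = (4 * M + 4) / (|c| / 2) := by rw [hbdef]; ring
    have hbApos : 0 < b - A := by rw [hbA]; positivity
    have key : ‖∫ t in A..b, (deriv f t - c)‖ ≤ (|c| / 2) * |b - A| := by
      refine intervalIntegral.norm_integral_le_of_norm_le_const fun x hx => ?_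
      have hx' : A < x := by
        rw [Set.uIoc_of_le (by linarith)] at hx
        exact hx.1
      have := hA x hx'.le
      rw [Real.dist_eq] at this
      rw [Real.norm_eq_abs]
      linarith
    have hsub : ∫ t in A..b, (deriv f t - c) = (f b - f A) - c * (b - A) := by
      rw [intervalIntegral.integral_sub (hdfc.intervalIntegrable _ _) intervalIntegrable_const,
        hftc, intervalIntegral.integral_const, smul_eq_mul]
      ring
    rw [hsub, Real.norm_eq_abs, abs_of_pos hbApos] at key
    have h2M : |f b - f A| ≤ 2 * M := by
      have := hM b; have := hM A
      have := abs_sub (f b) (f A)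
      calc |f b - f A| ≤ |f b| + |f A| := abs_sub _ _
        _ ≤ 2 * M := by linarith
    have htri : |c| * (b - A) ≤ |f b - f A| + |f b - f A - c * (b - A)| := by
      have : |c * (b - A)| ≤ |f b - f A| + |f b - f A - c * (b - A)| := by
        have := abs_sub (f b - f A) (f b - f A - c * (b - A))
        calc |c * (b - A)| = |(f b - f A) - (f b - f A - c * (b - A))| := by congr 1; ring
          _ ≤ |f b - f A| + |f b - f A - c * (b - A)| := abs_sub _ _
      rwa [abs_mul, abs_of_pos hbApos] at this
    have hval : (|c| / 2) * (b - A) = 4 * M + 4 := by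
      rw [hbA]
      field_simp
    have hcb : |c| * (b - A) = 8 * M + 8 := by
      rw [hbA]
      field_simp
      ring
    linarith
  rw [hc0] at hcf
  -- G
  set G : ℝ → ℝ := fun x => ∫ t in Set.Ioi x, g t with hGdef
  have hG : ∀ x, deriv f x = -G x := by
    intro x
    have h1 : Tendsto (fun b => deriv f x + ∫ t in x..b, g t) atTop (nhds (deriv f x + G x)) :=
      tendsto_const_nhds.add (intervalIntegral_tendsto_integral_Ioi x hgint.integrableOn tendsto_id)
    have h2 : Tendsto (deriv f) atTop (nhds (deriv f x + G x)) := by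
      refine h1.congr fun b => ?_
      rw [hftc' x b]; ring
    have := tendsto_nhds_unique h2 hcf
    linarith
  have hGx : ∀ x : ℝ, G x = G 0 - ∫ t in (0:ℝ)..x, g t := by
    intro x
    rcases le_total 0 x with h | h
    · have := split_Ioi hgint h
      simp only [hGdef]
      linarith
    · have := split_Ioi hgint h
      have hsymm : ∫ t in (0:ℝ)..x, g t = -∫ t in x..(0:ℝ), g t := by
        rw [intervalIntegral.integral_symm]
      simp only [hGdef]
      rw [hsymm]
      linarith
  have hGderiv : ∀ x, HasDerivAt G (-g x) x := by
    intro x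
    have h1 : HasDerivAt (fun u => ∫ t in (0:ℝ)..u, g t) (g x) x :=
      intervalIntegral.integral_hasDerivAt_right (hgc.intervalIntegrable 0 x)
        (hgc.stronglyMeasurableAtFilter _ _) hgc.continuousAt
    have h2 := (hasDerivAt_const x (G 0)).sub h1
    rw [show G = fun u => G 0 - ∫ t in (0:ℝ)..u, g t from funext hGx]
    simpa [Pi.sub_def] using h2
  have hGdiff : Differentiable ℝ G := fun x => (hGderiv x).differentiableAt
  have hGc : Continuous G := hGdiff.continuous
  have htgc : Continuous fun t : ℝ => t * g t := continuous_id.mul hgc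
  have hparts : ∀ x : ℝ, ∫ t in (0:ℝ)..x, G t = x * G x + ∫ t in (0:ℝ)..x, t * g t := by
    intro x
    have hφ : ∀ t : ℝ, HasDerivAt (fun u => u * G u) (G t - t * g t) t := by
      intro t
      have := (hasDerivAt_id t).mul (hGderiv t)
      convert this using 1
      · rfl
      · rfl
      · rfl
      · simp only [id_eq]
        ring
    have h1 : ∫ t in (0:ℝ)..x, (G t - t * g t) = x * G x - 0 * G 0 :=
      intervalIntegral.integral_eq_sub_of_hasDerivAt (fun t _ => hφ t)
        ((hGc.sub htgc).intervalIntegrable _ _)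
    rw [intervalIntegral.integral_sub (hGc.intervalIntegrable _ _)
      (htgc.intervalIntegrable _ _)] at h1
    linarith
  have hfx : ∀ x : ℝ, f x = f 0 - x * G x - ∫ t in (0:ℝ)..x, t * g t := by
    intro x
    have h1 : ∫ t in (0:ℝ)..x, deriv f t = f x - f 0 := hftc 0 x
    have h2 : ∫ t in (0:ℝ)..x, deriv f t = -∫ t in (0:ℝ)..x, G t := by
      rw [← intervalIntegral.integral_neg]
      exact intervalIntegral.integral_congr fun t _ => hG t
    have h3 := hparts x
    linarith
  have htail : Tendsto (fun x => ∫ t in Set.Ioi x, |t * g t|) atTop (nhds 0) :=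
    tail_tendsto htg.abs
  have hxG : Tendsto (fun x => x * G x) atTop (nhds 0) := by
    refine squeeze_zero_norm' ?_ htail
    filter_upwards [eventually_ge_atTop (0:ℝ)] with x hx
    rw [Real.norm_eq_abs]
    have h1 : x * G x = ∫ t in Set.Ioi x, x * g t := by
      rw [hGdef]
      exact (integral_const_mul x g).symm
    rw [h1]
    calc |∫ t in Set.Ioi x, x * g t| ≤ ∫ t in Set.Ioi x, |x * g t| := by
          simpa only [Real.norm_eq_abs] using
            norm_integral_le_integral_norm (μ := volume.restrict (Set.Ioi x)) (fun t => x * g t)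
      _ ≤ ∫ t in Set.Ioi x, |t * g t| := by
          refine setIntegral_mono_on ((hgint.const_mul x).abs.integrableOn)
            (htg.abs.integrableOn) measurableSet_Ioi fun t ht => ?_
          have ht' : x < t := ht
          have h0t : (0:ℝ) ≤ t := le_of_lt (lt_of_le_of_lt hx ht')
          have hxt : |x| ≤ |t| := by
            rw [abs_of_nonneg hx, abs_of_nonneg h0t]; exact ht'.le
          calc |x * g t| = |x| * |g t| := abs_mul _ _
            _ ≤ |t| * |g t| := mul_le_mul_of_nonneg_right hxt (abs_nonneg _)
            _ = |t * g t| := (abs_mul _ _).symm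
  have hitg : Tendsto (fun x => ∫ t in (0:ℝ)..x, t * g t) atTop
      (nhds (∫ t in Set.Ioi (0:ℝ), t * g t)) :=
    intervalIntegral_tendsto_integral_Ioi 0 htg.integrableOn tendsto_id
  refine ⟨⟨f 0 - 0 - ∫ t in Set.Ioi (0:ℝ), t * g t, ?_⟩, hcf⟩
  exact ((tendsto_const_nhds.sub hxG).sub hitg).congr fun x => (hfx x).symm

/-- Characterization of zero-energy resonances through bounded solutions: if `V : ℝ → ℝ`
is continuous with `∫ (1+|x|)|V(x)| dx < ∞` and `f` is a bounded `C²` solution of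
`-f'' + Vf = 0` on `ℝ`, then `f` converges to finite limits at `±∞` and `f' → 0` at `±∞`. -/
theorem stmt_13 (V : ℝ → ℝ) (hVc : Continuous V)
    (hVint : Integrable (fun x : ℝ => (1 + |x|) * |V x|))
    (f : ℝ → ℝ) (hf : ContDiff ℝ 2 f)
    (hfeq : ∀ x, -(deriv (deriv f) x) + V x * f x = 0)
    (hfbd : ∃ M : ℝ, ∀ x, |f x| ≤ M) :
    (∃ L : ℝ, Filter.Tendsto f Filter.atTop (nhds L)) ∧
      (∃ L' : ℝ, Filter.Tendsto f Filter.atBot (nhds L')) ∧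
      Filter.Tendsto (deriv f) Filter.atTop (nhds 0) ∧
      Filter.Tendsto (deriv f) Filter.atBot (nhds 0) := by
  obtain ⟨M, hM⟩ := hfbd
  obtain ⟨hL, hd⟩ := aux_top V hVc hVint f hf hfeq M hM
  -- reflected data
  set W : ℝ → ℝ := fun x => V (-x) with hWdef
  set F : ℝ → ℝ := fun x => f (-x) with hFdef
  have hWc : Continuous W := hVc.comp continuous_neg
  have hWint : Integrable (fun x : ℝ => (1 + |x|) * |W x|) := by
    have hemb : MeasurableEmbedding (fun x : ℝ => -x) :=
      (Homeomorph.neg ℝ).measurableEmbedding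
    have hmp : MeasurePreserving (fun x : ℝ => -x) (volume : Measure ℝ) volume :=
      Measure.measurePreserving_neg volume
    have := (hmp.integrable_comp_emb hemb
      (g := fun x : ℝ => (1 + |x|) * |V x|)).mpr hVint
    refine this.congr (ae_of_all _ fun x => ?_)
    simp [Function.comp, hWdef, abs_neg]
  have hFcd : ContDiff ℝ 2 F := hf.comp (contDiff_neg)
  have hdF : deriv F = fun x => -(deriv f (-x)) := by
    funext x
    exact deriv_comp_neg f x
  have hddF : ∀ x, deriv (deriv F) x = deriv (deriv f) (-x) := by
    intro x
    rw [hdF]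
    rw [deriv.fun_neg]
    rw [deriv_comp_neg (deriv f) x]
    ring
  have hFeq : ∀ x, -(deriv (deriv F) x) + W x * F x = 0 := by
    intro x
    rw [hddF x]
    exact hfeq (-x)
  have hFM : ∀ x, |F x| ≤ M := fun x => hM (-x)
  obtain ⟨⟨L', hL'⟩, hd'⟩ := aux_top W hWc hWint F hFcd hFeq M hFM
  have hneg : Filter.Tendsto (fun x : ℝ => -x) Filter.atBot Filter.atTop :=
    tendsto_neg_atBot_atTop
  refine ⟨hL, ⟨L', ?_⟩, hd, ?_⟩
  · have := hL'.comp hneg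
    refine this.congr fun x => ?_
    simp [hFdef, Function.comp]
  · have h1 : Filter.Tendsto (fun x : ℝ => deriv f (-x)) Filter.atTop (nhds 0) := by
      have h2 : Filter.Tendsto (fun x : ℝ => -(deriv F x)) Filter.atTop (nhds (-0)) := hd'.neg
      rw [neg_zero] at h2
      refine h2.congr fun x => ?_
      rw [hdF]; ring
    have := h1.comp hneg
    refine this.congr fun x => ?_
    simp [Function.comp]
end

section
/- Let ν > 0. For λ ∈ (0, ν) let x₁(λ) := √(ν²/λ² − 1), so that ±x₁(λ) are the turning points where ν²/(1 + y²) = λ². Then lim_{λ→0+} (1/log(1/λ)) ∫_{−x₁(λ)}^{x₁(λ)} √(ν²/(1 + y²) − λ²) dy = 2ν. In other words, the WKB action S(λ) through the inverse-square barrier satisfies S(λ) = 2ν |log λ| (1 + o(1)) as λ → 0+, so that the transmission coefficient T(λ) = e^{−S(λ)} and hence the Wronskian W(λ) = −2iλ/T(λ) behave like λ^{1−2ν} to leading order. -/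
open MeasureTheory Real Filter Set intervalIntegral
set_option maxHeartbeats 1000000

lemma sqrt_sub_sqrt_le (a b : ℝ) (hb : 0 ≤ b) (hba : b ≤ a) :
    Real.sqrt a - Real.sqrt b ≤ Real.sqrt (a - b) := by
  have h1 : Real.sqrt a ≤ Real.sqrt (a - b) + Real.sqrt b := by
    have h2 : a ≤ (Real.sqrt (a - b) + Real.sqrt b) ^ 2 := by
      have e1 : Real.sqrt (a - b) ^ 2 = a - b := Real.sq_sqrt (by linarith)
      have e2 : Real.sqrt b ^ 2 = b := Real.sq_sqrt hb
      nlinarith [Real.sqrt_nonneg (a - b), Real.sqrt_nonneg b]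
    calc Real.sqrt a ≤ Real.sqrt ((Real.sqrt (a - b) + Real.sqrt b) ^ 2) :=
          Real.sqrt_le_sqrt h2
      _ = Real.sqrt (a - b) + Real.sqrt b :=
          Real.sqrt_sq (by positivity)
  linarith

lemma integral_inv_sqrt (x : ℝ) :
    ∫ y in (-x)..x, (Real.sqrt (1 + y ^ 2))⁻¹ = 2 * Real.arsinh x := by
  have h := fun y (_ : y ∈ Set.uIcc (-x) x) => Real.hasDerivAt_arsinh y
  have hcont : Continuous fun y : ℝ => (Real.sqrt (1 + y ^ 2))⁻¹ := by
    apply Continuous.inv₀ (by continuity)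
    intro y
    positivity
  rw [intervalIntegral.integral_eq_sub_of_hasDerivAt h (hcont.intervalIntegrable _ _)]
  rw [Real.arsinh_neg]; ring

/-- WKB action through the inverse-square barrier: with turning points
`±x₁(λ) = ±√(ν²/λ² - 1)` where `ν²/(1+y²) = λ²`, one has
`(1/log(1/λ)) ∫_{-x₁(λ)}^{x₁(λ)} √(ν²/(1+y²) - λ²) dy → 2ν` as `λ → 0+` within `(0,ν)`,
i.e. `S(λ) = 2ν|log λ|(1+o(1))`. -/
theorem stmt_14 (ν : ℝ) (hν : 0 < ν) :
    Filter.Tendsto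
      (fun lam : ℝ =>
        (1 / Real.log (1 / lam)) *
          ∫ y in (-(Real.sqrt (ν ^ 2 / lam ^ 2 - 1)))..(Real.sqrt (ν ^ 2 / lam ^ 2 - 1)),
            Real.sqrt (ν ^ 2 / (1 + y ^ 2) - lam ^ 2))
      (nhdsWithin 0 (Set.Ioo 0 ν)) (nhds (2 * ν)) := by
  -- the filter restricts to 𝓝[>] 0
  have hmono : nhdsWithin (0:ℝ) (Set.Ioo 0 ν) ≤ nhdsWithin 0 (Set.Ioi 0) :=
    nhdsWithin_mono _ Set.Ioo_subset_Ioi_self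
  -- 1/log(1/lam) → 0
  have hinv : Filter.Tendsto (fun l : ℝ => 1 / Real.log (1 / l))
      (nhdsWithin 0 (Set.Ioo 0 ν)) (nhds 0) := by
    have h1 : Filter.Tendsto (fun l : ℝ => Real.log (1 / l)) (nhdsWithin 0 (Set.Ioi 0))
        Filter.atTop := by
      have : Filter.Tendsto (fun l : ℝ => 1 / l) (nhdsWithin 0 (Set.Ioi 0)) Filter.atTop := by
        simpa [one_div] using tendsto_inv_nhdsGT_zero (𝕜 := ℝ)
      exact Real.tendsto_log_atTop.comp this
    exact ((h1.mono_left hmono).inv_tendsto_atTop).congr (fun l => by simp [one_div])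
  -- eventual membership facts
  have hev : ∀ᶠ lam in nhdsWithin (0:ℝ) (Set.Ioo 0 ν), lam ∈ Set.Ioo (0:ℝ) ν ∧ lam < 1 := by
    filter_upwards [self_mem_nhdsWithin,
      eventually_nhdsWithin_of_eventually_nhds (eventually_lt_nhds one_pos)] with l h1 h2
    exact ⟨h1, h2⟩
  have hbound : ∀ᶠ l in nhdsWithin (0:ℝ) (Set.Ioo 0 ν),
      (2*ν + (2*ν*Real.log ν - 2*ν) * (1 / Real.log (1/l)) ≤
        (1 / Real.log (1 / l)) *
          ∫ y in (-(Real.sqrt (ν ^ 2 / l ^ 2 - 1)))..(Real.sqrt (ν ^ 2 / l ^ 2 - 1)),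
            Real.sqrt (ν ^ 2 / (1 + y ^ 2) - l ^ 2)) ∧
      ((1 / Real.log (1 / l)) *
          ∫ y in (-(Real.sqrt (ν ^ 2 / l ^ 2 - 1)))..(Real.sqrt (ν ^ 2 / l ^ 2 - 1)),
            Real.sqrt (ν ^ 2 / (1 + y ^ 2) - l ^ 2) ≤
        2*ν + (2*ν*Real.log (2*ν)) * (1 / Real.log (1/l))) := by
    filter_upwards [hev] with l hl
    obtain ⟨⟨hl0, hlν⟩, hl1⟩ := hl
    set x := Real.sqrt (ν ^ 2 / l ^ 2 - 1) with hxdef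
    set L := Real.log (1 / l) with hLdef
    have hL : 0 < L := Real.log_pos (one_lt_one_div hl0 hl1)
    have hx0 : 0 ≤ x := Real.sqrt_nonneg _
    have hnl : 1 ≤ ν ^ 2 / l ^ 2 := by
      rw [le_div_iff₀ (by positivity)]
      nlinarith
    have hx2 : x ^ 2 = ν ^ 2 / l ^ 2 - 1 := Real.sq_sqrt (by linarith)
    have hsx : Real.sqrt (1 + x ^ 2) = ν / l := by
      rw [show 1 + x ^ 2 = (ν / l) ^ 2 by rw [hx2]; field_simp; ring]
      exact Real.sqrt_sq (by positivity)
    have hxle : x ≤ ν / l := by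
      have h := Real.sqrt_le_sqrt (show x ^ 2 ≤ 1 + x ^ 2 by linarith)
      rwa [Real.sqrt_sq hx0, hsx] at h
    -- continuity / integrability
    have hc1 : Continuous fun y : ℝ => Real.sqrt (ν ^ 2 / (1 + y ^ 2) - l ^ 2) := by
      apply Real.continuous_sqrt.comp
      apply Continuous.sub _ continuous_const
      exact continuous_const.div (by continuity) (fun y => by positivity)
    have hc2 : Continuous fun y : ℝ => ν * (Real.sqrt (1 + y ^ 2))⁻¹ := by
      apply continuous_const.mul
      exact Continuous.inv₀ (by continuity) (fun y => by positivity)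
    have hc3 : Continuous fun y : ℝ => ν * (Real.sqrt (1 + y ^ 2))⁻¹ - l :=
      hc2.sub continuous_const
    -- pointwise bounds on [-x, x]
    have hkey : ∀ y ∈ Set.Icc (-x) x, l ^ 2 ≤ ν ^ 2 / (1 + y ^ 2) := by
      rintro y ⟨h1, h2⟩
      rw [le_div_iff₀ (by positivity)]
      have hy2 : y ^ 2 ≤ x ^ 2 := by nlinarith
      have he : l ^ 2 * (1 + x ^ 2) = ν ^ 2 := by rw [hx2]; field_simp; ring
      nlinarith [sq_nonneg l]
    have hub : ∀ y ∈ Set.Icc (-x) x,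
        Real.sqrt (ν ^ 2 / (1 + y ^ 2) - l ^ 2) ≤ ν * (Real.sqrt (1 + y ^ 2))⁻¹ := by
      intro y _
      have h1 : Real.sqrt (ν ^ 2 / (1 + y ^ 2) - l ^ 2) ≤ Real.sqrt (ν ^ 2 / (1 + y ^ 2)) :=
        Real.sqrt_le_sqrt (by nlinarith [sq_nonneg l])
      have h2 : Real.sqrt (ν ^ 2 / (1 + y ^ 2)) = ν * (Real.sqrt (1 + y ^ 2))⁻¹ := by
        rw [Real.sqrt_div (by positivity), Real.sqrt_sq hν.le, div_eq_mul_inv]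
      rw [← h2]
      exact h1
    have hlb : ∀ y ∈ Set.Icc (-x) x,
        ν * (Real.sqrt (1 + y ^ 2))⁻¹ - l ≤ Real.sqrt (ν ^ 2 / (1 + y ^ 2) - l ^ 2) := by
      intro y hy
      have h1 := sqrt_sub_sqrt_le (ν ^ 2 / (1 + y ^ 2)) (l ^ 2) (by positivity) (hkey y hy)
      have h2 : Real.sqrt (ν ^ 2 / (1 + y ^ 2)) = ν * (Real.sqrt (1 + y ^ 2))⁻¹ := by
        rw [Real.sqrt_div (by positivity), Real.sqrt_sq hν.le, div_eq_mul_inv]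
      have h3 : Real.sqrt (l ^ 2) = l := Real.sqrt_sq hl0.le
      rw [h2, h3] at h1
      linarith
    -- integral bounds
    have hIub : (∫ y in (-x)..x, Real.sqrt (ν ^ 2 / (1 + y ^ 2) - l ^ 2)) ≤
        2 * ν * Real.arsinh x := by
      have hm := intervalIntegral.integral_mono_on (μ := volume) (by linarith : -x ≤ x)
        (hc1.intervalIntegrable _ _) (hc2.intervalIntegrable _ _) hub
      calc (∫ y in (-x)..x, Real.sqrt (ν ^ 2 / (1 + y ^ 2) - l ^ 2))
          ≤ ∫ y in (-x)..x, ν * (Real.sqrt (1 + y ^ 2))⁻¹ := hm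
        _ = ν * ∫ y in (-x)..x, (Real.sqrt (1 + y ^ 2))⁻¹ :=
            intervalIntegral.integral_const_mul _ _
        _ = 2 * ν * Real.arsinh x := by rw [integral_inv_sqrt]; ring
    have hIlb : 2 * ν * Real.arsinh x - 2 * l * x ≤
        ∫ y in (-x)..x, Real.sqrt (ν ^ 2 / (1 + y ^ 2) - l ^ 2) := by
      have hm := intervalIntegral.integral_mono_on (μ := volume) (by linarith : -x ≤ x)
        (hc3.intervalIntegrable _ _) (hc1.intervalIntegrable _ _) hlb
      have heq : (∫ y in (-x)..x, (ν * (Real.sqrt (1 + y ^ 2))⁻¹ - l)) =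
          2 * ν * Real.arsinh x - 2 * l * x := by
        rw [intervalIntegral.integral_sub (hc2.intervalIntegrable _ _)
          intervalIntegrable_const, intervalIntegral.integral_const_mul,
          integral_inv_sqrt, intervalIntegral.integral_const]
        simp only [smul_eq_mul, sub_neg_eq_add]
        ring
      rw [heq] at hm
      exact hm
    -- arsinh bounds
    have harsinh : Real.arsinh x = Real.log (x + ν / l) := by
      rw [Real.arsinh, hsx]
    have hνl : (0:ℝ) < ν / l := div_pos hν hl0
    have haub : Real.arsinh x ≤ Real.log (2 * ν) + L := by
      have h1 : Real.arsinh x ≤ Real.log (2 * (ν / l)) := by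
        rw [harsinh]
        exact Real.log_le_log (by linarith) (by linarith)
      have h2 : Real.log (2 * (ν / l)) = Real.log (2 * ν) + L := by
        rw [show 2 * (ν / l) = (2 * ν) / l by ring, Real.log_div (by positivity) hl0.ne',
          hLdef, one_div, Real.log_inv]
        ring
      linarith
    have halb : Real.log ν + L ≤ Real.arsinh x := by
      have h1 : Real.log (ν / l) ≤ Real.arsinh x := by
        rw [harsinh]
        exact Real.log_le_log hνl (by linarith)
      have h2 : Real.log (ν / l) = Real.log ν + L := by
        rw [Real.log_div hν.ne' hl0.ne', hLdef, one_div, Real.log_inv]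
        ring
      linarith
    have hlx : l * x ≤ ν := by
      calc l * x ≤ l * (ν / l) := by nlinarith
        _ = ν := by field_simp
    have hLinv : L * (1 / L) = 1 := by field_simp
    have hLinv0 : 0 < 1 / L := by positivity
    have hSub : (∫ y in (-x)..x, Real.sqrt (ν ^ 2 / (1 + y ^ 2) - l ^ 2)) ≤
        2 * ν * L + 2 * ν * Real.log (2 * ν) := by nlinarith
    have hSlb : 2 * ν * L + (2 * ν * Real.log ν - 2 * ν) ≤
        ∫ y in (-x)..x, Real.sqrt (ν ^ 2 / (1 + y ^ 2) - l ^ 2) := by nlinarith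
    constructor
    · nlinarith [mul_le_mul_of_nonneg_left hSlb hLinv0.le]
    · nlinarith [mul_le_mul_of_nonneg_left hSub hLinv0.le]
  exact tendsto_of_tendsto_of_tendsto_of_le_of_le'
    (by simpa using tendsto_const_nhds.add (tendsto_const_nhds.mul hinv))
    (by simpa using tendsto_const_nhds.add (tendsto_const_nhds.mul hinv))
    (hbound.mono fun l h => h.1) (hbound.mono fun l h => h.2)
end

section
/- Let f : ℝ → ℂ be measurable with ∫_ℝ (1 + |y|)² |f(y)| dy < ∞, and for t > 0 define ψ(t, x) := (4πt)^{−1/2} e^{iπ/4} ∫_ℝ e^{−i(x−y)²/(4t)} f(y) dy (the free one-dimensional Schrödinger evolution of f). Then there is an absolute constant C such that for all t > 0 and all x ∈ ℝ, | ψ(t,x) − (4πt)^{−1/2} e^{iπ/4} ∫_ℝ f(y) dy | ≤ C t^{−3/2} (1 + |x|)² ∫_ℝ (1 + |y|)² |f(y)| dy. (This is the one-dimensional threshold expansion: the evolution equals c t^{−1/2} times the projection f ↦ ∫ f — reflecting the zero-energy resonance f ≡ 1 of −∂_x² — plus a remainder with t^{−3/2} local decay in weighted norms.) -/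
open MeasureTheory Complex

lemma norm_exp_neg_I_mul (r : ℝ) : ‖Complex.exp (-(Complex.I * (r : ℂ)))‖ = 1 := by
  have h : -(Complex.I * (r : ℂ)) = ((-r : ℝ) : ℂ) * Complex.I := by push_cast; ring
  rw [h, Complex.norm_exp_ofReal_mul_I]

lemma exp_I_sub_one_le (θ : ℝ) : ‖Complex.exp (-(Complex.I * (θ : ℂ))) - 1‖ ≤ 2 * |θ| := by
  have habs : ‖(-(Complex.I * (θ : ℂ)))‖ = |θ| := by
    rw [norm_neg, norm_mul, Complex.norm_I, Complex.norm_real, Real.norm_eq_abs, one_mul]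
  by_cases h : |θ| ≤ 1
  · have := Complex.norm_exp_sub_one_le (x := -(Complex.I * (θ : ℂ))) (by rw [habs]; exact h)
    simpa [habs] using this
  · have h1 : ‖Complex.exp (-(Complex.I * (θ : ℂ)))‖ = 1 := by
      rw [Complex.norm_exp]
      simp
    calc ‖Complex.exp (-(Complex.I * (θ : ℂ))) - 1‖
        ≤ ‖Complex.exp (-(Complex.I * (θ : ℂ)))‖ + ‖(1 : ℂ)‖ := norm_sub_le _ _
      _ = 2 := by rw [h1]; norm_num
      _ ≤ 2 * |θ| := by nlinarith [le_of_not_ge h]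

set_option maxHeartbeats 800000 in
/-- One-dimensional threshold expansion of the free Schrödinger evolution
`ψ(t,x) = (4πt)^{-1/2} e^{iπ/4} ∫ e^{-i(x-y)²/(4t)} f(y) dy`: the evolution equals
`(4πt)^{-1/2} e^{iπ/4} ∫ f` (reflecting the zero-energy resonance `f ≡ 1` of `-∂ₓ²`)
plus a remainder bounded by `C t^{-3/2} (1+|x|)² ∫ (1+|y|)² |f(y)| dy`. -/
theorem stmt_18 (f : ℝ → ℂ) (hf : Measurable f)
    (hint : Integrable (fun y : ℝ => (1 + |y|) ^ 2 * ‖f y‖)) :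
    ∃ C : ℝ, ∀ t : ℝ, 0 < t → ∀ x : ℝ,
      ‖(((4 * Real.pi * t) ^ (-(1 : ℝ) / 2) : ℝ) : ℂ) *
            Complex.exp (Complex.I * (Real.pi : ℂ) / 4) *
            (∫ y : ℝ, Complex.exp (-(Complex.I * (((x - y) ^ 2 / (4 * t) : ℝ) : ℂ))) * f y) -
          (((4 * Real.pi * t) ^ (-(1 : ℝ) / 2) : ℝ) : ℂ) *
            Complex.exp (Complex.I * (Real.pi : ℂ) / 4) * ∫ y : ℝ, f y‖ ≤
        C * t ^ (-(3 : ℝ) / 2) * (1 + |x|) ^ 2 * ∫ y : ℝ, (1 + |y|) ^ 2 * ‖f y‖ := by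
  refine ⟨1, fun t ht x => ?_⟩
  have hfint : Integrable f := by
    refine hint.mono hf.aestronglyMeasurable (ae_of_all _ fun y => ?_)
    have h1 : (1:ℝ) ≤ (1 + |y|) ^ 2 := by nlinarith [abs_nonneg y]
    have := norm_nonneg (f y)
    rw [Real.norm_eq_abs, _root_.abs_of_nonneg (by positivity)]
    nlinarith
  set g : ℝ → ℂ := fun y => Complex.exp (-(Complex.I * (((x - y) ^ 2 / (4 * t) : ℝ) : ℂ))) with hg
  have hgnorm : ∀ y, ‖g y‖ = 1 := fun y => norm_exp_neg_I_mul _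
  have hgmeas : Measurable g := by
    apply Complex.measurable_exp.comp
    fun_prop
  have hgf : Integrable (fun y => g y * f y) := by
    refine hfint.mono (hgmeas.mul hf).aestronglyMeasurable (ae_of_all _ fun y => ?_)
    rw [norm_mul, hgnorm, one_mul]
  set A : ℝ := (4 * Real.pi * t) ^ (-(1 : ℝ) / 2) with hA
  set e : ℂ := Complex.exp (Complex.I * (Real.pi : ℂ) / 4) with he
  have henorm : ‖e‖ = 1 := by rw [he, Complex.norm_exp]; simp
  have hApos : 0 < A := Real.rpow_pos_of_pos (by positivity) _
  have key : ‖(∫ y : ℝ, g y * f y) - ∫ y : ℝ, f y‖ ≤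
      (1 + |x|) ^ 2 / (2 * t) * ∫ y : ℝ, (1 + |y|) ^ 2 * ‖f y‖ := by
    rw [← integral_sub hgf hfint]
    rw [show ((1 + |x|) ^ 2 / (2 * t) * ∫ y : ℝ, (1 + |y|) ^ 2 * ‖f y‖)
        = ∫ y : ℝ, (1 + |x|) ^ 2 / (2 * t) * ((1 + |y|) ^ 2 * ‖f y‖) from
      (integral_const_mul _ _).symm]
    refine norm_integral_le_of_norm_le (hint.const_mul _) (ae_of_all _ fun y => ?_)
    have h1 : g y * f y - f y = (g y - 1) * f y := by ring
    rw [h1, norm_mul]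
    have h2 : ‖g y - 1‖ ≤ 2 * |(x - y) ^ 2 / (4 * t)| := exp_I_sub_one_le _
    have h3 : |(x - y) ^ 2 / (4 * t)| = (x - y) ^ 2 / (4 * t) := by
      rw [_root_.abs_of_nonneg]; positivity
    have h4 : (x - y) ^ 2 ≤ ((1 + |x|) * (1 + |y|)) ^ 2 := by
      have := abs_sub x y
      have hxy : |x - y| ≤ |x| + |y| := abs_sub _ _
      have h0 : |x - y| ^ 2 ≤ (|x| + |y|) ^ 2 := pow_le_pow_left₀ (abs_nonneg _) hxy 2
      rw [_root_.sq_abs] at h0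
      nlinarith [abs_nonneg x, abs_nonneg y, mul_nonneg (abs_nonneg x) (abs_nonneg y)]
    have h5 : ‖g y - 1‖ ≤ (1 + |x|) ^ 2 * (1 + |y|) ^ 2 / (2 * t) := by
      rw [h3] at h2
      calc ‖g y - 1‖ ≤ 2 * ((x - y) ^ 2 / (4 * t)) := h2
        _ ≤ 2 * (((1 + |x|) * (1 + |y|)) ^ 2 / (4 * t)) := by
            gcongr
        _ = (1 + |x|) ^ 2 * (1 + |y|) ^ 2 / (2 * t) := by ring
    calc ‖g y - 1‖ * ‖f y‖ ≤ ((1 + |x|) ^ 2 * (1 + |y|) ^ 2 / (2 * t)) * ‖f y‖ := by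
          gcongr
      _ = (1 + |x|) ^ 2 / (2 * t) * ((1 + |y|) ^ 2 * ‖f y‖) := by ring
  have hJ : 0 ≤ ∫ y : ℝ, (1 + |y|) ^ 2 * ‖f y‖ :=
    integral_nonneg fun y => by positivity
  set J : ℝ := ∫ y : ℝ, (1 + |y|) ^ 2 * ‖f y‖ with hJdef
  have step1 : ‖((A : ℂ)) * e * (∫ y : ℝ, g y * f y) - ((A : ℂ)) * e * ∫ y : ℝ, f y‖
      = A * ‖(∫ y : ℝ, g y * f y) - ∫ y : ℝ, f y‖ := by
    rw [← mul_sub, norm_mul, norm_mul, henorm, mul_one, Complex.norm_real,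
      Real.norm_eq_abs, abs_of_pos hApos]
  rw [step1]
  -- bound A ≤ t ^ (-(1)/2)
  have hAle : A ≤ t ^ (-(1 : ℝ) / 2) := by
    have hb : t ≤ 4 * Real.pi * t := by nlinarith [Real.pi_gt_three]
    have h1 : A = ((4 * Real.pi * t) ^ ((1 : ℝ) / 2))⁻¹ := by
      rw [hA, show (-(1:ℝ)/2) = -((1:ℝ)/2) by norm_num, Real.rpow_neg (by positivity)]
    have h2 : t ^ (-(1 : ℝ) / 2) = (t ^ ((1 : ℝ) / 2))⁻¹ := by
      rw [show (-(1:ℝ)/2) = -((1:ℝ)/2) by norm_num, Real.rpow_neg ht.le]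
    rw [h1, h2]
    exact inv_anti₀ (Real.rpow_pos_of_pos ht _)
      (Real.rpow_le_rpow ht.le hb (by norm_num))
  have hpow : t ^ (-(1 : ℝ) / 2) * t⁻¹ = t ^ (-(3 : ℝ) / 2) := by
    rw [← Real.rpow_neg_one t, ← Real.rpow_add ht]; norm_num
  calc A * ‖(∫ y : ℝ, g y * f y) - ∫ y : ℝ, f y‖
      ≤ A * ((1 + |x|) ^ 2 / (2 * t) * J) := mul_le_mul_of_nonneg_left key hApos.le
    _ ≤ t ^ (-(1 : ℝ) / 2) * ((1 + |x|) ^ 2 / (2 * t) * J) := by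
        have hpos : (0:ℝ) ≤ (1 + |x|) ^ 2 / (2 * t) * J := by positivity
        exact mul_le_mul_of_nonneg_right hAle hpos
    _ ≤ 1 * t ^ (-(3 : ℝ) / 2) * (1 + |x|) ^ 2 * J := by
        rw [one_mul]
        have ht2 : (0:ℝ) < t ^ (-(1 : ℝ) / 2) := Real.rpow_pos_of_pos ht _
        have : t ^ (-(1 : ℝ) / 2) * ((1 + |x|) ^ 2 / (2 * t) * J)
            = (t ^ (-(1 : ℝ) / 2) * t⁻¹) * (1 + |x|) ^ 2 * J / 2 := by
          field_simp
        rw [this, hpow]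
        have := Real.rpow_pos_of_pos ht (-(3 : ℝ) / 2)
        nlinarith [mul_nonneg (mul_nonneg this.le (sq_nonneg (1 + |x|))) hJ]
end
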